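/- arXiv:2401.15738 — 8 statements merged into one kernel-verified Lean document; each statement's English description precedes it below -/
import Mathlib

section
/- Let s ∈ (0,1), q ≥ 1, ϱ > 0, and let Ω ⊂ ℝ^d be a bounded open set. Then there exists a constant C > 0 (depending on d, s, q, Ω, ϱ) such that for every measurable function u : ℝ^d → ℝ with u = 0 almost everywhere in ℝ^d \ Ω, one has ∫_Ω |u(x)|^q dx ≤ C ∬_{{(x,y) ∈ ℝ^{2d} : |x−y| < ϱ}} |u(x)−u(y)|^q / |x−y|^{d+sq} dx dy. -/
open MeasureTheory ENNReal Set Metric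

private lemma sum_rpow_le_aux {N : ℕ} (hN : 0 < N) (b : ℕ → ℝ≥0∞) {q : ℝ} (hq0 : 0 ≤ q) :
    (∑ k ∈ Finset.range N, b k) ^ q ≤
      (N : ℝ≥0∞) ^ q * ∑ k ∈ Finset.range N, b k ^ q := by
  obtain ⟨k0, hk0, hsup⟩ := Finset.exists_mem_eq_sup (Finset.range N)
    ⟨0, Finset.mem_range.2 hN⟩ b
  have h1 : ∑ k ∈ Finset.range N, b k ≤ (N : ℝ≥0∞) * b k0 := by
    calc ∑ k ∈ Finset.range N, b k
        ≤ (Finset.range N).card • Finset.sup (Finset.range N) b :=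
          Finset.sum_le_card_nsmul _ _ _ (fun i hi => Finset.le_sup hi)
      _ = (N : ℝ≥0∞) * b k0 := by rw [hsup, Finset.card_range, nsmul_eq_mul]
  calc (∑ k ∈ Finset.range N, b k) ^ q
      ≤ ((N : ℝ≥0∞) * b k0) ^ q := ENNReal.rpow_le_rpow h1 hq0
    _ = (N : ℝ≥0∞) ^ q * b k0 ^ q := ENNReal.mul_rpow_of_nonneg _ _ hq0
    _ ≤ (N : ℝ≥0∞) ^ q * ∑ k ∈ Finset.range N, b k ^ q := by
        have h2 : b k0 ^ q ≤ ∑ k ∈ Finset.range N, b k ^ q :=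
          Finset.single_le_sum (f := fun k => b k ^ q) (fun i _ => zero_le) hk0
        exact mul_le_mul_right h2 _

/-- Fractional Poincaré inequality with short-range interactions for functions
vanishing a.e. outside a bounded open set `Ω ⊆ ℝ^d`. -/
theorem fractional_poincare_dirichlet
    (d : ℕ) (hd : 0 < d) (s q ϱ : ℝ)
    (hs : s ∈ Set.Ioo (0:ℝ) 1) (hq : 1 ≤ q) (hϱ : 0 < ϱ)
    (Ω : Set (EuclideanSpace ℝ (Fin d))) (hΩo : IsOpen Ω)
    (hΩb : Bornology.IsBounded Ω) :
    ∃ C : ℝ, 0 < C ∧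
      ∀ u : EuclideanSpace ℝ (Fin d) → ℝ, Measurable u →
        (∀ᵐ x ∂volume, x ∉ Ω → u x = 0) →
        ∫⁻ x in Ω, ENNReal.ofReal (|u x| ^ q) ≤
          ENNReal.ofReal C *
            ∫⁻ x, ∫⁻ y in {y | dist x y < ϱ},
              ENNReal.ofReal (|u x - u y| ^ q / dist x y ^ ((d:ℝ) + s * q)) := by
  obtain ⟨hs0, hs1⟩ := hs
  have hq0 : (0:ℝ) < q := lt_of_lt_of_le one_pos hq
  set e : ℝ := (d:ℝ) + s * q with he_def
  have he : 0 < e := by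
    have : (0:ℝ) < s * q := mul_pos hs0 hq0
    have hd' : (0:ℝ) ≤ (d:ℝ) := Nat.cast_nonneg d
    linarith
  have hepow : 0 < ϱ ^ e := Real.rpow_pos_of_pos hϱ e
  -- a ball containing Ω
  obtain ⟨R₀, hR₀⟩ := hΩb.subset_closedBall 0
  set R : ℝ := max R₀ 1 with hR_def
  have hR1 : (1:ℝ) ≤ R := le_max_right _ _
  have hR0 : (0:ℝ) < R := lt_of_lt_of_le one_pos hR1
  have hΩR : Ω ⊆ closedBall 0 R := hR₀.trans (closedBall_subset_closedBall (le_max_left _ _))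
  -- number of steps
  obtain ⟨N, hN⟩ := exists_nat_gt (4 * R / ϱ)
  have hNpos : 0 < N := by
    have h1 : (0:ℝ) < 4 * R / ϱ := by positivity
    exact_mod_cast Nat.cast_pos.mp (h1.trans hN)
  have hNϱ : 2 * R < (N:ℝ) * (ϱ / 2) := by
    rw [div_lt_iff₀ hϱ] at hN
    nlinarith
  -- the annulus of good increments
  set A : Set (EuclideanSpace ℝ (Fin d)) := ball 0 ϱ \ ball 0 (ϱ/2) with hA_def
  have hAme : MeasurableSet A := measurableSet_ball.diff measurableSet_ball
  have hballs : ball (0 : EuclideanSpace ℝ (Fin d)) (ϱ/2) ⊆ ball 0 ϱ :=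
    ball_subset_ball (by linarith)
  have hvA : volume A
      = volume (ball (0 : EuclideanSpace ℝ (Fin d)) ϱ)
        - volume (ball (0 : EuclideanSpace ℝ (Fin d)) (ϱ/2)) :=
    measure_diff hballs measurableSet_ball.nullMeasurableSet measure_ball_lt_top.ne
  have hlt : volume (ball (0 : EuclideanSpace ℝ (Fin d)) (ϱ/2))
      < volume (ball (0 : EuclideanSpace ℝ (Fin d)) ϱ) := by
    rw [Measure.addHaar_ball_of_pos _ _ (half_pos hϱ), Measure.addHaar_ball_of_pos _ _ hϱ]
    have hfr : Module.finrank ℝ (EuclideanSpace ℝ (Fin d)) = d := finrank_euclideanSpace_fin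
    refine (ENNReal.mul_lt_mul_iff_left (measure_ball_pos volume (0 : EuclideanSpace ℝ (Fin d)) one_pos).ne'
      measure_ball_lt_top.ne).2 ?_
    rw [ENNReal.ofReal_lt_ofReal_iff (by positivity)]
    rw [hfr]
    exact pow_lt_pow_left₀ (half_lt_self hϱ) (by positivity) hd.ne'
  have hvA_pos : 0 < volume A := by
    rw [hvA]; exact tsub_pos_of_lt hlt
  have hvA_ne_top : volume A ≠ ⊤ :=
    ne_top_of_le_ne_top measure_ball_lt_top.ne (measure_mono diff_subset)
  -- constants
  set c0 : ℝ≥0∞ := (N : ℝ≥0∞) ^ q * (N : ℝ≥0∞) with hc0_def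
  have hNq_ne_top : (N : ℝ≥0∞) ^ q ≠ ⊤ :=
    (ENNReal.rpow_lt_top_of_nonneg hq0.le (by simp)).ne
  have hc0_ne0 : c0 ≠ 0 := by
    simp [hc0_def, ENNReal.rpow_eq_zero_iff, hNpos.ne', hq0.le, hq0]
  have hc0_ne_top : c0 ≠ ⊤ := ENNReal.mul_ne_top hNq_ne_top (by simp)
  set M : ℝ≥0∞ := ENNReal.ofReal (ϱ ^ e) with hM_def
  have hM_ne0 : M ≠ 0 := (ENNReal.ofReal_pos.2 hepow).ne'
  have hM_ne_top : M ≠ ⊤ := ENNReal.ofReal_ne_top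
  set D : ℝ≥0∞ := c0 * M * (volume A)⁻¹ with hD_def
  have hD_ne_top : D ≠ ⊤ :=
    ENNReal.mul_ne_top (ENNReal.mul_ne_top hc0_ne_top hM_ne_top)
      (ENNReal.inv_ne_top.2 hvA_pos.ne')
  refine ⟨D.toReal + 1, by positivity, ?_⟩
  intro u hu hu0
  -- abbreviations
  set φ : EuclideanSpace ℝ (Fin d) → EuclideanSpace ℝ (Fin d) → ℝ≥0∞ :=
    fun x z => ENNReal.ofReal (|u x - u (x + z)| ^ q / ‖z‖ ^ e) with hφ_def
  set F : EuclideanSpace ℝ (Fin d) → ℝ≥0∞ :=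
    fun z => ∫⁻ x, ENNReal.ofReal (|u x - u (x + z)| ^ q) with hF_def
  set L : ℝ≥0∞ := ∫⁻ x in Ω, ENNReal.ofReal (|u x| ^ q) with hL_def
  set I : ℝ≥0∞ := ∫⁻ x, ∫⁻ y in {y | dist x y < ϱ},
      ENNReal.ofReal (|u x - u y| ^ q / dist x y ^ e) with hI_def
  -- measurability of the basic integrands
  have hmd : ∀ w w' : EuclideanSpace ℝ (Fin d),
      Measurable fun x => ENNReal.ofReal (|u (x + w) - u (x + w')| ^ q) := by
    intro w w'
    exact ENNReal.measurable_ofReal.comp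
      (((hu.comp (measurable_add_const w)).sub
        (hu.comp (measurable_add_const w'))).abs.pow measurable_const)
  -- Step A : rewriting the double integral
  have hψmeas : Measurable fun p : EuclideanSpace ℝ (Fin d) × EuclideanSpace ℝ (Fin d) =>
      ENNReal.ofReal (|u p.1 - u (p.1 + p.2)| ^ q / ‖p.2‖ ^ e) := by
    refine ENNReal.measurable_ofReal.comp (Measurable.div ?_ ?_)
    · exact ((hu.comp measurable_fst).sub
        (hu.comp (measurable_fst.add measurable_snd))).abs.pow measurable_const
    · exact measurable_snd.norm.pow measurable_const
  have hindmeas : Measurable (Function.uncurry fun x z =>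
      (ball (0 : EuclideanSpace ℝ (Fin d)) ϱ).indicator (φ x) z) := by
    have heq : (Function.uncurry fun x z =>
        (ball (0 : EuclideanSpace ℝ (Fin d)) ϱ).indicator (φ x) z)
        = ((univ : Set (EuclideanSpace ℝ (Fin d))) ×ˢ
            ball (0 : EuclideanSpace ℝ (Fin d)) ϱ).indicator
            (fun p => ENNReal.ofReal (|u p.1 - u (p.1 + p.2)| ^ q / ‖p.2‖ ^ e)) := by
      funext p
      by_cases hp : p.2 ∈ ball (0 : EuclideanSpace ℝ (Fin d)) ϱ <;>
        simp [Function.uncurry, Set.indicator_apply, hp, hφ_def]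
    rw [heq]
    exact hψmeas.indicator (MeasurableSet.univ.prod measurableSet_ball)
  have stepA : I = ∫⁻ z in ball (0 : EuclideanSpace ℝ (Fin d)) ϱ, ∫⁻ x, φ x z := by
    have h1 : ∀ x : EuclideanSpace ℝ (Fin d),
        (∫⁻ y in {y | dist x y < ϱ}, ENNReal.ofReal (|u x - u y| ^ q / dist x y ^ e))
        = ∫⁻ z, (ball (0 : EuclideanSpace ℝ (Fin d)) ϱ).indicator (φ x) z := by
      intro x
      have hSme : MeasurableSet {y : EuclideanSpace ℝ (Fin d) | dist x y < ϱ} := by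
        have : {y : EuclideanSpace ℝ (Fin d) | dist x y < ϱ} = ball x ϱ := by
          ext y; simp [mem_ball, dist_comm]
        rw [this]; exact measurableSet_ball
      rw [← lintegral_indicator hSme]
      rw [← lintegral_add_left_eq_self (fun y => ({y | dist x y < ϱ}).indicator
        (fun y => ENNReal.ofReal (|u x - u y| ^ q / dist x y ^ e)) y) x]
      congr 1
      funext z
      by_cases hz : ‖z‖ < ϱ
      · rw [Set.indicator_of_mem (by simpa [dist_self_add_right] using hz),
          Set.indicator_of_mem (mem_ball_zero_iff.2 hz)]
        simp [hφ_def, dist_self_add_right]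
      · rw [Set.indicator_of_notMem (by simpa [dist_self_add_right] using hz),
          Set.indicator_of_notMem (fun h => hz (mem_ball_zero_iff.1 h))]
    rw [hI_def]
    simp_rw [h1]
    rw [lintegral_lintegral_swap hindmeas.aemeasurable]
    rw [← lintegral_indicator measurableSet_ball]
    congr 1
    funext z
    by_cases hz : z ∈ ball (0 : EuclideanSpace ℝ (Fin d)) ϱ
    · simp [Set.indicator_of_mem hz]
    · simp [Set.indicator_of_notMem hz]
  -- Step B : key estimate L ≤ c0 * F z for increments in the annulus
  have key : ∀ z : EuclideanSpace ℝ (Fin d), ϱ/2 ≤ ‖z‖ → L ≤ c0 * F z := by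
    intro z hz
    have hout : ∀ x, x ∈ Ω → x + N • z ∉ Ω := by
      intro x hx hmem
      have h1 : ‖x‖ ≤ R := mem_closedBall_zero_iff.1 (hΩR hx)
      have h2 : ‖x + N • z‖ ≤ R := mem_closedBall_zero_iff.1 (hΩR hmem)
      have h3 : ‖(N • z : EuclideanSpace ℝ (Fin d))‖ = (N:ℝ) * ‖z‖ := by
        rw [← Nat.cast_smul_eq_nsmul ℝ, norm_smul, Real.norm_natCast]
      have h4 : (N:ℝ) * (ϱ/2) ≤ (N:ℝ) * ‖z‖ := by
        apply mul_le_mul_of_nonneg_left hz (Nat.cast_nonneg N)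
      have h5 : ‖(N • z : EuclideanSpace ℝ (Fin d))‖ ≤ ‖x + N • z‖ + ‖x‖ := by
        have h6 : ‖(N • z : EuclideanSpace ℝ (Fin d))‖ = ‖(x + N • z) - x‖ := by
          congr 1; abel
        rw [h6]; exact norm_sub_le _ _
      rw [h3] at h5
      linarith
    have hae : ∀ᵐ x ∂(volume : Measure (EuclideanSpace ℝ (Fin d))),
        (x + N • z ∉ Ω → u (x + N • z) = 0) :=
      (measurePreserving_add_right volume (N • z)).quasiMeasurePreserving.ae hu0
    have hpt : ∀ᵐ x ∂(volume : Measure (EuclideanSpace ℝ (Fin d))), x ∈ Ω →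
        ENNReal.ofReal (|u x| ^ q) ≤ (N:ℝ≥0∞) ^ q *
          ∑ k ∈ Finset.range N,
            ENNReal.ofReal (|u (x + k • z) - u (x + (k+1) • z)| ^ q) := by
      filter_upwards [hae] with x hx hxΩ
      have hNz : u (x + N • z) = 0 := hx (hout x hxΩ)
      have htel : u x = ∑ k ∈ Finset.range N, (u (x + k • z) - u (x + (k+1) • z)) := by
        rw [Finset.sum_range_sub' (fun k => u (x + k • z))]
        simp [hNz]
      have habs : |u x| ≤ ∑ k ∈ Finset.range N, |u (x + k • z) - u (x + (k+1) • z)| := by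
        rw [htel]; exact Finset.abs_sum_le_sum_abs _ _
      calc ENNReal.ofReal (|u x| ^ q) = ENNReal.ofReal |u x| ^ q :=
            (ENNReal.ofReal_rpow_of_nonneg (abs_nonneg _) hq0.le).symm
        _ ≤ (∑ k ∈ Finset.range N,
              ENNReal.ofReal |u (x + k • z) - u (x + (k+1) • z)|) ^ q := by
            apply ENNReal.rpow_le_rpow _ hq0.le
            rw [← ENNReal.ofReal_sum_of_nonneg (fun i _ => abs_nonneg _)]
            exact ENNReal.ofReal_le_ofReal habs
        _ ≤ (N:ℝ≥0∞) ^ q * ∑ k ∈ Finset.range N,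
              ENNReal.ofReal |u (x + k • z) - u (x + (k+1) • z)| ^ q :=
            sum_rpow_le_aux hNpos _ hq0.le
        _ = (N:ℝ≥0∞) ^ q * ∑ k ∈ Finset.range N,
              ENNReal.ofReal (|u (x + k • z) - u (x + (k+1) • z)| ^ q) := by
            congr 1
            exact Finset.sum_congr rfl fun k _ =>
              ENNReal.ofReal_rpow_of_nonneg (abs_nonneg _) hq0.le
    have hL1 : L ≤ ∫⁻ x, (N:ℝ≥0∞) ^ q * ∑ k ∈ Finset.range N,
        ENNReal.ofReal (|u (x + k • z) - u (x + (k+1) • z)| ^ q) := by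
      rw [hL_def]
      calc (∫⁻ x in Ω, ENNReal.ofReal (|u x| ^ q))
          ≤ ∫⁻ x in Ω, (N:ℝ≥0∞) ^ q * ∑ k ∈ Finset.range N,
              ENNReal.ofReal (|u (x + k • z) - u (x + (k+1) • z)| ^ q) := by
            refine lintegral_mono_ae ?_
            filter_upwards [ae_restrict_of_ae hpt, ae_restrict_mem hΩo.measurableSet]
              with x h1 h2
            exact h1 h2
        _ ≤ _ := lintegral_mono' Measure.restrict_le_self le_rfl
    have hL2 : (∫⁻ x, (N:ℝ≥0∞) ^ q * ∑ k ∈ Finset.range N,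
        ENNReal.ofReal (|u (x + k • z) - u (x + (k+1) • z)| ^ q)) = c0 * F z := by
      rw [lintegral_const_mul' _ _ hNq_ne_top]
      rw [lintegral_finset_sum _ (fun k _ => hmd (k • z) ((k+1) • z))]
      have heach : ∀ k : ℕ,
          (∫⁻ x, ENNReal.ofReal (|u (x + k • z) - u (x + (k+1) • z)| ^ q)) = F z := by
        intro k
        have hstep : ∀ x : EuclideanSpace ℝ (Fin d),
            x + (k+1) • z = (x + k • z) + z := by
          intro x; rw [succ_nsmul, add_assoc]
        simp_rw [hstep]
        exact lintegral_add_right_eq_self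
          (fun x => ENNReal.ofReal (|u x - u (x + z)| ^ q)) (k • z)
      rw [Finset.sum_congr rfl (fun k _ => heach k), Finset.sum_const, Finset.card_range,
        nsmul_eq_mul, hc0_def]
      ring
    exact hL1.trans_eq hL2
  -- Step C : lower bound for the double integral
  have hΦ : ∀ z ∈ A, M⁻¹ * F z ≤ ∫⁻ x, φ x z := by
    intro z hz
    have hz1 : ‖z‖ < ϱ := mem_ball_zero_iff.1 hz.1
    have hz2 : ϱ/2 ≤ ‖z‖ := le_of_not_gt (fun h => hz.2 (mem_ball_zero_iff.2 h))
    have hz0 : (0:ℝ) < ‖z‖ := lt_of_lt_of_le (by linarith) hz2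
    rw [hF_def, ← lintegral_const_mul' _ _ (ENNReal.inv_ne_top.2 hM_ne0)]
    refine lintegral_mono fun x => ?_
    have hdiv : |u x - u (x + z)| ^ q / ϱ ^ e ≤ |u x - u (x + z)| ^ q / ‖z‖ ^ e := by
      apply div_le_div_of_nonneg_left (by positivity) (by positivity)
      exact Real.rpow_le_rpow (norm_nonneg _) hz1.le he.le
    calc M⁻¹ * ENNReal.ofReal (|u x - u (x + z)| ^ q)
        = ENNReal.ofReal (|u x - u (x + z)| ^ q / ϱ ^ e) := by
          rw [ENNReal.ofReal_div_of_pos hepow, div_eq_mul_inv, mul_comm, hM_def]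
      _ ≤ φ x z := ENNReal.ofReal_le_ofReal hdiv
  have hI2 : M⁻¹ * ((L / c0) * volume A) ≤ I := by
    rw [stepA]
    calc M⁻¹ * ((L / c0) * volume A) = ∫⁻ z in A, M⁻¹ * (L / c0) := by
          rw [setLIntegral_const, mul_assoc]
      _ ≤ ∫⁻ z in A, ∫⁻ x, φ x z := by
          refine lintegral_mono_ae ?_
          filter_upwards [ae_restrict_mem hAme] with z hz
          have hz2 : ϱ/2 ≤ ‖z‖ := le_of_not_gt (fun h => hz.2 (mem_ball_zero_iff.2 h))
          have hdivle : L / c0 ≤ F z :=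
            (ENNReal.div_le_iff_le_mul (Or.inl hc0_ne0) (Or.inl hc0_ne_top)).2
              ((key z hz2).trans_eq (mul_comm _ _))
          exact le_trans (mul_le_mul_right hdivle _) (hΦ z hz)
      _ ≤ ∫⁻ z in ball (0 : EuclideanSpace ℝ (Fin d)) ϱ, ∫⁻ x, φ x z :=
          lintegral_mono_set diff_subset
  -- conclusion
  have hDle : L ≤ D * I := by
    have h1 : (L / c0) * volume A ≤ M * I := by
      have := (ENNReal.mul_le_iff_le_inv (ENNReal.inv_ne_zero.2 hM_ne_top)
        (ENNReal.inv_ne_top.2 hM_ne0)).1 hI2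
      simpa [inv_inv] using this
    have h2 : L / c0 ≤ M * I / volume A :=
      (ENNReal.le_div_iff_mul_le (Or.inl hvA_pos.ne') (Or.inl hvA_ne_top)).2 h1
    calc L = L / c0 * c0 := (ENNReal.div_mul_cancel hc0_ne0 hc0_ne_top).symm
      _ ≤ (M * I / volume A) * c0 := mul_le_mul_left h2 _
      _ = D * I := by rw [hD_def, ENNReal.div_eq_inv_mul]; ring
  calc L ≤ D * I := hDle
    _ ≤ ENNReal.ofReal (D.toReal + 1) * I := by
        apply mul_le_mul_left
        calc D = ENNReal.ofReal D.toReal := (ENNReal.ofReal_toReal hD_ne_top).symm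
          _ ≤ ENNReal.ofReal (D.toReal + 1) := ENNReal.ofReal_le_ofReal (by linarith)
end

section
/- Let s ∈ (0,1), q ≥ 1, and let Ω ⊂ ℝ^d be a bounded and connected open set with Lipschitz boundary. Then for every ϱ > 0 there exists a constant C = C(d, Ω, s, q, ϱ) > 0 such that for every measurable u : Ω → ℝ, ∫_Ω |u(x) − m(u)|^q dx ≤ C ∬_{{(x,y) ∈ Ω×Ω : |x−y| < ϱ}} |u(x)−u(y)|^q / |x−y|^{d+sq} dx dy, where m(u) := (1/|Ω|) ∫_Ω u dx is the mean of u over Ω. -/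
open MeasureTheory ENNReal Set Metric
set_option linter.unusedSectionVars false

namespace FracPoincareAux

variable {α : Type*} [MeasurableSpace α]

/-- The `q`-th power difference kernel, valued in `ℝ≥0∞`. -/
noncomputable def ker (q : ℝ) (u : α → ℝ) (x y : α) : ℝ≥0∞ :=
  ENNReal.ofReal (|u x - u y| ^ q)

lemma ker_eq_rpow {q : ℝ} (hq0 : 0 ≤ q) (u : α → ℝ) (x y : α) :
    ker q u x y = (ENNReal.ofReal |u x - u y|) ^ q :=
  (ENNReal.ofReal_rpow_of_nonneg (abs_nonneg _) hq0).symm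

lemma ker_meas {q : ℝ} (hq0 : 0 ≤ q) {u : α → ℝ} (hu : Measurable u) :
    Measurable (Function.uncurry (ker q u)) := by
  apply ENNReal.measurable_ofReal.comp
  exact (Real.continuous_rpow_const hq0).measurable.comp
    (((hu.comp measurable_fst).sub (hu.comp measurable_snd)).abs)

lemma ker_meas_right {q : ℝ} (hq0 : 0 ≤ q) {u : α → ℝ} (hu : Measurable u) (x : α) :
    Measurable (fun y => ker q u x y) :=
  (ker_meas hq0 hu).comp (measurable_const.prodMk measurable_id)

lemma ker_meas_left {q : ℝ} (hq0 : 0 ≤ q) {u : α → ℝ} (hu : Measurable u) (y : α) :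
    Measurable (fun x => ker q u x y) :=
  (ker_meas hq0 hu).comp (measurable_id.prodMk measurable_const)

lemma ker_triangle {q : ℝ} (hq : 1 ≤ q) (u : α → ℝ) (x y z : α) :
    ker q u x y ≤ (2 : ℝ≥0∞) ^ (q - 1) * (ker q u x z + ker q u z y) := by
  have hq0 : (0:ℝ) ≤ q := le_trans zero_le_one hq
  rw [ker_eq_rpow hq0, ker_eq_rpow hq0, ker_eq_rpow hq0]
  have h1 : ENNReal.ofReal |u x - u y| ≤
      ENNReal.ofReal |u x - u z| + ENNReal.ofReal |u z - u y| := by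
    rw [← ENNReal.ofReal_add (abs_nonneg _) (abs_nonneg _)]
    exact ENNReal.ofReal_le_ofReal (abs_sub_le _ _ _)
  calc ENNReal.ofReal |u x - u y| ^ q
      ≤ (ENNReal.ofReal |u x - u z| + ENNReal.ofReal |u z - u y|) ^ q :=
        ENNReal.rpow_le_rpow h1 hq0
    _ ≤ (2 : ℝ≥0∞) ^ (q - 1) *
        (ENNReal.ofReal |u x - u z| ^ q + ENNReal.ofReal |u z - u y| ^ q) :=
        ENNReal.rpow_add_le_mul_rpow_add_rpow _ _ hq

lemma two_rpow_ne_top {q : ℝ} (hq : 1 ≤ q) : (2 : ℝ≥0∞) ^ (q - 1) ≠ ⊤ :=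
  (ENNReal.rpow_lt_top_of_nonneg (by linarith) (by norm_num)).ne

/-- Jensen / Hölder: `(∫⁻ g)^q ≤ (∫⁻ g^q) * (μ univ)^(q-1)` for `q ≥ 1`. -/
lemma jen (μ : Measure α) {q : ℝ} (hq : 1 ≤ q) {g : α → ℝ≥0∞}
    (hg : AEMeasurable g μ) :
    (∫⁻ a, g a ∂μ) ^ q ≤ (∫⁻ a, g a ^ q ∂μ) * (μ Set.univ) ^ (q - 1) := by
  rcases eq_or_lt_of_le hq with h1 | h1
  · simp [← h1]
  · have hq0 : (0:ℝ) < q := lt_trans zero_lt_one h1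
    set p : ℝ := q / (q - 1) with hp
    have hqp : q.HolderConjugate p := by
      rw [Real.holderConjugate_iff]
      constructor
      · exact h1
      · rw [hp]; field_simp; ring
    have hold := ENNReal.lintegral_mul_le_Lp_mul_Lq μ hqp hg aemeasurable_const
      (g := fun _ => (1 : ℝ≥0∞))
    simp only [mul_one, ENNReal.one_rpow, lintegral_const, one_mul] at hold
    have h2 := ENNReal.rpow_le_rpow hold hq0.le
    rw [ENNReal.mul_rpow_of_nonneg _ _ hq0.le, ← ENNReal.rpow_mul, ← ENNReal.rpow_mul,
      one_div, inv_mul_cancel₀ hq0.ne', ENNReal.rpow_one] at h2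
    have hpq : 1 / p * q = q - 1 := by
      rw [hp]; field_simp
    rw [hpq] at h2
    simpa using h2

/-- Double integral of the kernel over `P × Q`. -/
noncomputable def Phi (μ : Measure α) (q : ℝ) (u : α → ℝ) (P Q : Set α) : ℝ≥0∞ :=
  ∫⁻ x in P, ∫⁻ y in Q, ker q u x y ∂μ ∂μ

lemma phi_mono (μ : Measure α) (q : ℝ) (u : α → ℝ) {P P' Q Q' : Set α}
    (hP : P' ⊆ P) (hQ : Q' ⊆ Q) : Phi μ q u P' Q' ≤ Phi μ q u P Q := by
  refine le_trans (lintegral_mono fun x => lintegral_mono_set hQ) ?_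
  exact lintegral_mono_set hP


lemma phi_symm (μ : Measure α) [SigmaFinite μ] {q : ℝ} (hq0 : 0 ≤ q) {u : α → ℝ}
    (hu : Measurable u) (P Q : Set α) : Phi μ q u P Q = Phi μ q u Q P := by
  unfold Phi
  rw [lintegral_lintegral_swap (ker_meas hq0 hu).aemeasurable]
  refine lintegral_congr fun y => lintegral_congr fun x => ?_
  unfold ker
  rw [abs_sub_comm]

/-- Inserting an intermediate averaging set `W`. -/
lemma phi_ins (μ : Measure α) [SigmaFinite μ] {q : ℝ} (hq : 1 ≤ q) {u : α → ℝ}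
    (hu : Measurable u)
    {P Q W : Set α} (hPt : μ P ≠ ⊤) (hQt : μ Q ≠ ⊤) (hW0 : μ W ≠ 0) (hWt : μ W ≠ ⊤) :
    Phi μ q u P Q ≤ (μ W)⁻¹ * ((2 : ℝ≥0∞) ^ (q - 1) *
      (μ Q * Phi μ q u P W + μ P * Phi μ q u W Q)) := by
  have hq0 : (0:ℝ) ≤ q := le_trans zero_le_one hq
  have hker2 : Measurable (Function.uncurry fun y z => ker q u z y) :=
    (ker_meas hq0 hu).comp measurable_swap
  have key : μ W * Phi μ q u P Q ≤
      (2 : ℝ≥0∞) ^ (q - 1) * (μ Q * Phi μ q u P W + μ P * Phi μ q u W Q) := by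
    unfold Phi
    have h1 : (μ W) * (∫⁻ x in P, ∫⁻ y in Q, ker q u x y ∂μ ∂μ)
        = ∫⁻ x in P, ∫⁻ y in Q, ∫⁻ _z in W, ker q u x y ∂μ ∂μ ∂μ := by
      rw [← lintegral_const_mul' _ _ hWt]
      refine lintegral_congr fun x => ?_
      rw [← lintegral_const_mul' _ _ hWt]
      refine lintegral_congr fun y => ?_
      rw [setLIntegral_const, mul_comm]
    rw [h1]
    have h2 : ∀ x y, (∫⁻ _z in W, ker q u x y ∂μ) ≤
        (2 : ℝ≥0∞) ^ (q - 1) *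
          ((∫⁻ z in W, ker q u x z ∂μ) + (∫⁻ z in W, ker q u z y ∂μ)) := by
      intro x y
      calc (∫⁻ _z in W, ker q u x y ∂μ)
          ≤ ∫⁻ z in W, (2 : ℝ≥0∞) ^ (q - 1) * (ker q u x z + ker q u z y) ∂μ :=
            lintegral_mono fun z => ker_triangle hq u x y z
        _ = (2 : ℝ≥0∞) ^ (q - 1) *
            ((∫⁻ z in W, ker q u x z ∂μ) + (∫⁻ z in W, ker q u z y ∂μ)) := by
            rw [lintegral_const_mul' _ _ (two_rpow_ne_top hq),
              lintegral_add_left (ker_meas_right hq0 hu x)]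
    have hc : (∫⁻ y in Q, ∫⁻ z in W, ker q u z y ∂μ ∂μ)
        = ∫⁻ z in W, ∫⁻ y in Q, ker q u z y ∂μ ∂μ :=
      lintegral_lintegral_swap hker2.aemeasurable
    have hcm : AEMeasurable (fun y => ∫⁻ z in W, ker q u z y ∂μ) (μ.restrict Q) :=
      (Measurable.lintegral_prod_right (f := fun y z => ker q u z y) hker2).aemeasurable.restrict
    calc (∫⁻ x in P, ∫⁻ y in Q, ∫⁻ _z in W, ker q u x y ∂μ ∂μ ∂μ)
        ≤ ∫⁻ x in P, ∫⁻ y in Q, (2 : ℝ≥0∞) ^ (q - 1) *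
            ((∫⁻ z in W, ker q u x z ∂μ) + (∫⁻ z in W, ker q u z y ∂μ)) ∂μ ∂μ :=
          lintegral_mono fun x => lintegral_mono fun y => h2 x y
      _ = ∫⁻ x in P, (2 : ℝ≥0∞) ^ (q - 1) *
            (μ Q * (∫⁻ z in W, ker q u x z ∂μ)
              + ∫⁻ y in Q, ∫⁻ z in W, ker q u z y ∂μ ∂μ) ∂μ := by
          refine lintegral_congr fun x => ?_
          rw [lintegral_const_mul' _ _ (two_rpow_ne_top hq)]
          congr 1
          rw [lintegral_add_left' aemeasurable_const, setLIntegral_const, mul_comm]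
      _ = (2 : ℝ≥0∞) ^ (q - 1) *
            (μ Q * (∫⁻ x in P, ∫⁻ z in W, ker q u x z ∂μ ∂μ)
              + μ P * (∫⁻ z in W, ∫⁻ y in Q, ker q u z y ∂μ ∂μ)) := by
          rw [lintegral_const_mul' _ _ (two_rpow_ne_top hq)]
          congr 1
          rw [lintegral_add_right' _ aemeasurable_const,
            lintegral_const_mul' _ _ hQt, setLIntegral_const, hc]
          ring
  calc Phi μ q u P Q = (μ W)⁻¹ * (μ W * Phi μ q u P Q) := by
        rw [← mul_assoc, ENNReal.inv_mul_cancel hW0 hWt, one_mul]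
    _ ≤ (μ W)⁻¹ * ((2 : ℝ≥0∞) ^ (q - 1) *
        (μ Q * Phi μ q u P W + μ P * Phi μ q u W Q)) := mul_le_mul_right key _

end FracPoincareAux

open FracPoincareAux

/-- A bounded open set has Lipschitz boundary, formalized here via a uniform
interior cone condition (a classical equivalent characterization for bounded
open sets). -/
def HasLipschitzBoundary {d : ℕ} (Ω : Set (EuclideanSpace ℝ (Fin d))) : Prop :=
  ∃ r h : ℝ, 0 < r ∧ 0 < h ∧
    ∀ x ∈ frontier Ω, ∃ v : EuclideanSpace ℝ (Fin d), ‖v‖ = 1 ∧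
      ∀ y ∈ Metric.ball x r ∩ Ω, ∀ t ∈ Set.Ioo (0:ℝ) h,
        ∀ z : EuclideanSpace ℝ (Fin d), ‖z‖ < t * r / h → y + t • v + z ∈ Ω

/-- Fractional Poincaré inequality (mean-zero version) with short-range
interactions on a bounded connected Lipschitz open set. -/
theorem fractional_poincare_mean
    (d : ℕ) (hd : 0 < d) (s q : ℝ)
    (hs : s ∈ Set.Ioo (0:ℝ) 1) (hq : 1 ≤ q)
    (Ω : Set (EuclideanSpace ℝ (Fin d))) (hΩo : IsOpen Ω)
    (hΩb : Bornology.IsBounded Ω) (hΩc : IsConnected Ω)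
    (hΩl : HasLipschitzBoundary Ω) :
    ∀ ϱ : ℝ, 0 < ϱ →
      ∃ C : ℝ, 0 < C ∧
        ∀ u : EuclideanSpace ℝ (Fin d) → ℝ, Measurable u →
          ∫⁻ x in Ω, ENNReal.ofReal (|u x - ⨍ y in Ω, u y| ^ q) ≤
            ENNReal.ofReal C *
              ∫⁻ x in Ω, ∫⁻ y in Ω ∩ {y | dist x y < ϱ},
                ENNReal.ofReal (|u x - u y| ^ q / dist x y ^ ((d:ℝ) + s * q)) := by
  classical
  intro ϱ hϱ
  obtain ⟨hs0, hs1⟩ := hs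
  have hq0 : (0:ℝ) < q := lt_of_lt_of_le one_pos hq
  set ε : ℝ := (d:ℝ) + s * q with hεdef
  have hε : 0 < ε := by positivity
  have hne : Ω.Nonempty := hΩc.nonempty
  have hμ0 : volume Ω ≠ 0 := (hΩo.measure_pos volume hne).ne'
  have hμt : volume Ω ≠ ⊤ := hΩb.measure_lt_top.ne
  set r : ℝ := ϱ / 4 with hrdef
  have hr0 : 0 < r := by positivity
  obtain ⟨t, htΩ, htfin, htcov⟩ := finite_approx_of_totallyBounded
    (hΩb.isCompact_closure.totallyBounded.subset subset_closure) r hr0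
  -- the pieces of the cover
  set A : EuclideanSpace ℝ (Fin d) → Set (EuclideanSpace ℝ (Fin d)) :=
    fun c => Ω ∩ ball c r with hAdef
  have hAsub : ∀ c, A c ⊆ Ω := fun c => inter_subset_left
  have hAmeas : ∀ c, MeasurableSet (A c) :=
    fun c => (hΩo.inter isOpen_ball).measurableSet
  have hA0 : ∀ c ∈ t, volume (A c) ≠ 0 := fun c hc =>
    ((hΩo.inter isOpen_ball).measure_pos volume ⟨c, htΩ hc, mem_ball_self hr0⟩).ne'
  have hAt : ∀ c, volume (A c) ≠ ⊤ :=
    fun c => (lt_of_le_of_lt (measure_mono (hAsub c)) hμt.lt_top).ne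
  have hAdist : ∀ c, ∀ x ∈ A c, ∀ y ∈ A c, dist x y < ϱ := by
    intro c x hx y hy
    calc dist x y ≤ dist x c + dist c y := dist_triangle _ _ _
      _ < r + r := add_lt_add hx.2 (by rw [dist_comm]; exact hy.2)
      _ ≤ ϱ := by rw [hrdef]; linarith
  obtain ⟨x0, hx0⟩ := hne
  obtain ⟨c₀, hc₀, _⟩ : ∃ c ∈ t, x0 ∈ ball c r := by
    simpa using htcov hx0
  -- the "short range" energy
  set D : (EuclideanSpace ℝ (Fin d) → ℝ) → ℝ≥0∞ := fun u =>
    ∫⁻ x in Ω, ∫⁻ y in Ω ∩ {y | dist x y < ϱ}, ker q u x y with hDdef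
  have hmeasB : ∀ x : EuclideanSpace ℝ (Fin d),
      MeasurableSet (Ω ∩ {y | dist x y < ϱ}) := by
    intro x
    exact (hΩo.inter (isOpen_lt (continuous_const.dist continuous_id) continuous_const)).measurableSet
  -- local pieces are controlled by `D`
  have hloc : ∀ (u : EuclideanSpace ℝ (Fin d) → ℝ) (P W : Set (EuclideanSpace ℝ (Fin d))),
      MeasurableSet P → P ⊆ Ω → W ⊆ Ω → (∀ x ∈ P, ∀ y ∈ W, dist x y < ϱ) →
      Phi volume q u P W ≤ D u := by
    intro u P W hPm hPΩ hWΩ hdist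
    have h1 : Phi volume q u P W ≤ ∫⁻ x in P, ∫⁻ y in Ω ∩ {y | dist x y < ϱ}, ker q u x y := by
      refine setLIntegral_mono' hPm fun x hx => ?_
      exact lintegral_mono_set fun y hy => ⟨hWΩ hy, hdist x hx y hy⟩
    exact h1.trans (lintegral_mono_set hPΩ)
  -- chaining: every piece is connected to the base piece `A c₀`
  have key : ∀ c ∈ t, ∃ K : ℝ≥0∞, K ≠ ⊤ ∧
      ∀ u : EuclideanSpace ℝ (Fin d) → ℝ, Measurable u →
        Phi volume q u (A c) (A c₀) ≤ K * D u := by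
    intro c hc
    by_contra hbad
    -- the set of "good" centers
    set B : Set (EuclideanSpace ℝ (Fin d)) := {c' | c' ∈ t ∧ ∃ K : ℝ≥0∞, K ≠ ⊤ ∧
      ∀ u : EuclideanSpace ℝ (Fin d) → ℝ, Measurable u →
        Phi volume q u (A c') (A c₀) ≤ K * D u} with hBdef
    have hc₀B : c₀ ∈ B := by
      refine ⟨hc₀, 1, one_ne_top, fun u hu => ?_⟩
      rw [one_mul]
      exact hloc u (A c₀) (A c₀) (hAmeas c₀) (hAsub c₀) (hAsub c₀) (hAdist c₀)
    -- adjacency propagates goodness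
    have hadj : ∀ c₁ ∈ B, ∀ c₂ ∈ t, (A c₁ ∩ A c₂).Nonempty → c₂ ∈ B := by
      intro c₁ hc₁ c₂ hc₂ hW
      obtain ⟨K, hKt, hK⟩ := hc₁.2
      set W := A c₁ ∩ A c₂ with hWdef
      have hWo : IsOpen W := (hΩo.inter isOpen_ball).inter (hΩo.inter isOpen_ball)
      have hW0 : volume W ≠ 0 := (hWo.measure_pos volume hW).ne'
      have hWt : volume W ≠ ⊤ := (lt_of_le_of_lt
        (measure_mono (inter_subset_left.trans (hAsub c₁))) hμt.lt_top).ne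
      refine ⟨hc₂, (volume W)⁻¹ * ((2 : ℝ≥0∞) ^ (q - 1) *
        (volume (A c₀) + volume (A c₂) * K)), ?_, fun u hu => ?_⟩
      · refine ENNReal.mul_ne_top (ENNReal.inv_ne_top.2 hW0) (ENNReal.mul_ne_top
          (two_rpow_ne_top hq) (ENNReal.add_ne_top.2 ⟨hAt c₀, ENNReal.mul_ne_top (hAt c₂) hKt⟩))
      · have h1 := phi_ins volume hq hu (hAt c₂) (hAt c₀) hW0 hWt
          (P := A c₂) (Q := A c₀) (W := W)
        have h2 : Phi volume q u (A c₂) W ≤ D u :=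
          hloc u (A c₂) W (hAmeas c₂) (hAsub c₂)
            (inter_subset_right.trans (hAsub c₂))
            (fun x hx y hy => hAdist c₂ x hx y hy.2)
        have h3 : Phi volume q u W (A c₀) ≤ K * D u :=
          (phi_mono volume q u inter_subset_left (le_refl _)).trans (hK u hu)
        calc Phi volume q u (A c₂) (A c₀)
            ≤ (volume W)⁻¹ * ((2 : ℝ≥0∞) ^ (q - 1) *
              (volume (A c₀) * Phi volume q u (A c₂) W
                + volume (A c₂) * Phi volume q u W (A c₀))) := h1
          _ ≤ (volume W)⁻¹ * ((2 : ℝ≥0∞) ^ (q - 1) *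
              (volume (A c₀) * D u + volume (A c₂) * (K * D u))) := by
              gcongr
          _ = (volume W)⁻¹ * ((2 : ℝ≥0∞) ^ (q - 1) *
              (volume (A c₀) + volume (A c₂) * K)) * D u := by ring
    -- connectivity argument
    set U : Set (EuclideanSpace ℝ (Fin d)) := ⋃ c' ∈ B, ball c' r with hUdef
    set V : Set (EuclideanSpace ℝ (Fin d)) := ⋃ c' ∈ t \ B, ball c' r with hVdef
    have hUo : IsOpen U := isOpen_biUnion fun _ _ => isOpen_ball
    have hVo : IsOpen V := isOpen_biUnion fun _ _ => isOpen_ball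
    have hcover : Ω ⊆ U ∪ V := by
      intro x hx
      obtain ⟨c', hc', hxc'⟩ : ∃ c' ∈ t, x ∈ ball c' r := by simpa using htcov hx
      by_cases hB : c' ∈ B
      · exact Or.inl (mem_biUnion hB hxc')
      · exact Or.inr (mem_biUnion ⟨hc', hB⟩ hxc')
    have hUne : (Ω ∩ U).Nonempty :=
      ⟨c₀, htΩ hc₀, mem_biUnion hc₀B (mem_ball_self hr0)⟩
    have hVne : (Ω ∩ V).Nonempty :=
      ⟨c, htΩ hc, mem_biUnion ⟨hc, fun h => hbad h.2⟩ (mem_ball_self hr0)⟩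
    obtain ⟨z, hzΩ, hzU, hzV⟩ := hΩc.isPreconnected U V hUo hVo hcover hUne hVne
    obtain ⟨c₁, hc₁B, hz1⟩ : ∃ c₁ ∈ B, z ∈ ball c₁ r := by simpa [hUdef, mem_ball] using hzU
    obtain ⟨c₂, hc₂, hz2⟩ : ∃ c₂ ∈ t \ B, z ∈ ball c₂ r := by simpa [hVdef, mem_ball] using hzV
    exact hc₂.2 (hadj c₁ hc₁B c₂ hc₂.1 ⟨z, ⟨hzΩ, hz1⟩, ⟨hzΩ, hz2⟩⟩)
  -- every pair of pieces, chained through the base piece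
  have key' : ∀ c ∈ t, ∀ c' ∈ t, ∃ K : ℝ≥0∞, K ≠ ⊤ ∧
      ∀ u : EuclideanSpace ℝ (Fin d) → ℝ, Measurable u →
        Phi volume q u (A c) (A c') ≤ K * D u := by
    intro c hc c' hc'
    obtain ⟨K1, hK1t, hK1⟩ := key c hc
    obtain ⟨K2, hK2t, hK2⟩ := key c' hc'
    refine ⟨(volume (A c₀))⁻¹ * ((2 : ℝ≥0∞) ^ (q - 1) *
      (volume (A c') * K1 + volume (A c) * K2)), ?_, fun u hu => ?_⟩
    · exact ENNReal.mul_ne_top (ENNReal.inv_ne_top.2 (hA0 c₀ hc₀))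
        (ENNReal.mul_ne_top (two_rpow_ne_top hq) (ENNReal.add_ne_top.2
          ⟨ENNReal.mul_ne_top (hAt c') hK1t, ENNReal.mul_ne_top (hAt c) hK2t⟩))
    · have h1 := phi_ins volume hq hu (hAt c) (hAt c') (hA0 c₀ hc₀) (hAt c₀)
        (P := A c) (Q := A c') (W := A c₀)
      have h2 : Phi volume q u (A c₀) (A c') ≤ K2 * D u := by
        rw [phi_symm volume hq0.le hu]
        exact hK2 u hu
      calc Phi volume q u (A c) (A c')
          ≤ (volume (A c₀))⁻¹ * ((2 : ℝ≥0∞) ^ (q - 1) *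
            (volume (A c') * Phi volume q u (A c) (A c₀)
              + volume (A c) * Phi volume q u (A c₀) (A c'))) := h1
        _ ≤ (volume (A c₀))⁻¹ * ((2 : ℝ≥0∞) ^ (q - 1) *
            (volume (A c') * (K1 * D u) + volume (A c) * (K2 * D u))) := by
            have h0 : Phi volume q u (A c) (A c₀) ≤ K1 * D u := hK1 u hu
            gcongr
        _ = (volume (A c₀))⁻¹ * ((2 : ℝ≥0∞) ^ (q - 1) *
            (volume (A c') * K1 + volume (A c) * K2)) * D u := by ring
  -- summing up over the cover
  haveI htF : Fintype t := htfin.fintype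
  have hΩeq : Ω = ⋃ c : t, A (c : EuclideanSpace ℝ (Fin d)) := by
    apply Subset.antisymm
    · intro x hx
      obtain ⟨c', hc', hxc'⟩ : ∃ c' ∈ t, x ∈ ball c' r := by simpa using htcov hx
      exact mem_iUnion.2 ⟨⟨c', hc'⟩, hx, hxc'⟩
    · exact iUnion_subset fun c => hAsub _
  have main : ∃ K : ℝ≥0∞, K ≠ ⊤ ∧
      ∀ u : EuclideanSpace ℝ (Fin d) → ℝ, Measurable u →
        Phi volume q u Ω Ω ≤ K * D u := by
    choose K hKt hK using fun (c : t) (c' : t) => key' c c.2 c' c'.2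
    refine ⟨∑ c : t, ∑ c' : t, K c c', ?_, fun u hu => ?_⟩
    · exact (ENNReal.sum_lt_top.mpr fun c _ =>
        ENNReal.sum_lt_top.mpr fun c' _ => (hKt c c').lt_top).ne
    · have hstep1 : Phi volume q u Ω Ω ≤
          ∑ c : t, Phi volume q u (A c) Ω := by
        unfold Phi
        rw [hΩeq]
        refine le_trans (lintegral_iUnion_le _ _) ?_
        rw [tsum_fintype]
      have hstep2 : ∀ c : t, Phi volume q u (A c) Ω ≤
          ∑ c' : t, Phi volume q u (A c) (A c') := by
        intro c
        unfold Phi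
        have hin : ∀ x, (∫⁻ y in Ω, ker q u x y) ≤
            ∑ c' : t, ∫⁻ y in A (c' : EuclideanSpace ℝ (Fin d)), ker q u x y := by
          intro x
          rw [hΩeq]
          refine le_trans (lintegral_iUnion_le _ _) ?_
          rw [tsum_fintype]
        refine le_trans (lintegral_mono hin) ?_
        rw [lintegral_finset_sum _ (fun c' _ => ?_)]
        exact Measurable.lintegral_prod_right (ker_meas hq0.le hu)
      calc Phi volume q u Ω Ω ≤ ∑ c : t, Phi volume q u (A c) Ω := hstep1
        _ ≤ ∑ c : t, ∑ c' : t, Phi volume q u (A c) (A c') :=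
            Finset.sum_le_sum fun c _ => hstep2 c
        _ ≤ ∑ c : t, ∑ c' : t, K c c' * D u :=
            Finset.sum_le_sum fun c _ => Finset.sum_le_sum fun c' _ => hK c c' u hu
        _ = (∑ c : t, ∑ c' : t, K c c') * D u := by
            rw [Finset.sum_mul]
            exact Finset.sum_congr rfl fun c _ => by rw [Finset.sum_mul]
  -- comparison of the plain kernel with the singular kernel
  have hDE : ∀ u : EuclideanSpace ℝ (Fin d) → ℝ,
      D u ≤ ENNReal.ofReal (ϱ ^ ε) *
        ∫⁻ x in Ω, ∫⁻ y in Ω ∩ {y | dist x y < ϱ},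
          ENNReal.ofReal (|u x - u y| ^ q / dist x y ^ ε) := by
    intro u
    have hϱε : (0:ℝ) ≤ ϱ ^ ε := Real.rpow_nonneg hϱ.le ε
    rw [← lintegral_const_mul' _ _ ENNReal.ofReal_ne_top]
    refine lintegral_mono fun x => ?_
    rw [← lintegral_const_mul' _ _ ENNReal.ofReal_ne_top]
    refine setLIntegral_mono' (hmeasB x) fun y hy => ?_
    rw [← ENNReal.ofReal_mul hϱε]
    refine ENNReal.ofReal_le_ofReal ?_
    rcases eq_or_ne (dist x y) 0 with h0 | h0
    · have hxy : x = y := by rwa [dist_eq_zero] at h0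
      subst hxy
      rw [sub_self, abs_zero, Real.zero_rpow hq0.ne']
      positivity
    · have hd0 : 0 < dist x y := lt_of_le_of_ne dist_nonneg (Ne.symm h0)
      have h1 : dist x y ^ ε ≤ ϱ ^ ε := Real.rpow_le_rpow dist_nonneg hy.2.le hε.le
      have h2 : 0 < dist x y ^ ε := Real.rpow_pos_of_pos hd0 _
      calc |u x - u y| ^ q = |u x - u y| ^ q / dist x y ^ ε * dist x y ^ ε :=
            (div_mul_cancel₀ _ h2.ne').symm
        _ ≤ |u x - u y| ^ q / dist x y ^ ε * ϱ ^ ε := by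
            apply mul_le_mul_of_nonneg_left h1
            positivity
        _ = ϱ ^ ε * (|u x - u y| ^ q / dist x y ^ ε) := mul_comm _ _
  -- the final constant
  obtain ⟨K, hKt, hK⟩ := main
  set Kfin : ℝ≥0∞ := (volume Ω)⁻¹ * K * ENNReal.ofReal (ϱ ^ ε) with hKfin
  have hKfint : Kfin ≠ ⊤ :=
    ENNReal.mul_ne_top (ENNReal.mul_ne_top (ENNReal.inv_ne_top.2 hμ0) hKt)
      ENNReal.ofReal_ne_top
  refine ⟨Kfin.toReal + 1, by positivity, fun u hu => ?_⟩
  have hCle : Kfin ≤ ENNReal.ofReal (Kfin.toReal + 1) := by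
    conv_lhs => rw [← ENNReal.ofReal_toReal hKfint]
    exact ENNReal.ofReal_le_ofReal (by linarith)
  set Eint : ℝ≥0∞ := ∫⁻ x in Ω, ∫⁻ y in Ω ∩ {y | dist x y < ϱ},
    ENNReal.ofReal (|u x - u y| ^ q / dist x y ^ ε) with hEint
  rcases eq_or_ne Eint ⊤ with hE | hE
  · rw [hE, ENNReal.mul_top (by
      simp only [ne_eq, ENNReal.ofReal_eq_zero, not_le]
      positivity)]
    exact le_top
  -- now `Eint` is finite, hence `u` is integrable on `Ω`
  have hDfin : D u ≠ ⊤ := by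
    refine (lt_of_le_of_lt (hDE u) ?_).ne
    exact ENNReal.mul_lt_top ENNReal.ofReal_lt_top hE.lt_top
  have hPhifin : Phi volume q u Ω Ω ≠ ⊤ := by
    refine (lt_of_le_of_lt (hK u hu) ?_).ne
    exact ENNReal.mul_lt_top hKt.lt_top hDfin.lt_top
  have hgm : Measurable fun x => ∫⁻ y in Ω, ker q u x y :=
    Measurable.lintegral_prod_right (ker_meas hq0.le hu)
  have hae : ∀ᵐ x ∂(volume.restrict Ω), (∫⁻ y in Ω, ker q u x y) < ⊤ :=
    ae_lt_top hgm hPhifin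
  haveI : (ae (volume.restrict Ω)).NeBot := by
    rw [ae_neBot, ne_eq, Measure.restrict_eq_zero]
    exact hμ0
  obtain ⟨x₁, hx₁⟩ := hae.exists
  -- `u ∈ L^q(Ω)` hence integrable on `Ω`
  haveI : Fact (volume Ω < ⊤) := ⟨hμt.lt_top⟩
  have hmem : MemLp u (ENNReal.ofReal q) (volume.restrict Ω) := by
    refine ⟨hu.aestronglyMeasurable, ?_⟩
    rw [eLpNorm_eq_lintegral_rpow_enorm_toReal (by simpa [ENNReal.ofReal_eq_zero, not_le] using hq0)
      ENNReal.ofReal_ne_top]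
    rw [ENNReal.toReal_ofReal hq0.le]
    refine ENNReal.rpow_lt_top_of_nonneg (by positivity) (ne_of_lt ?_)
    have hbd : ∀ y, ((‖u y‖₊ : ℝ≥0∞)) ^ q ≤
        (2 : ℝ≥0∞) ^ (q - 1) * (ker q u x₁ y + ENNReal.ofReal (|u x₁| ^ q)) := by
      intro y
      have e1 : ((‖u y‖₊ : ℝ≥0∞)) = ENNReal.ofReal |u y| := Real.enorm_eq_ofReal_abs _
      have e2 : ENNReal.ofReal |u y| ≤
          ENNReal.ofReal |u x₁ - u y| + ENNReal.ofReal |u x₁| := by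
        rw [← ENNReal.ofReal_add (abs_nonneg _) (abs_nonneg _)]
        refine ENNReal.ofReal_le_ofReal ?_
        calc |u y| = |u x₁ - (u x₁ - u y)| := by ring_nf
          _ ≤ |u x₁| + |u x₁ - u y| := abs_sub _ _
          _ = |u x₁ - u y| + |u x₁| := add_comm _ _
      calc ((‖u y‖₊ : ℝ≥0∞)) ^ q
          ≤ (ENNReal.ofReal |u x₁ - u y| + ENNReal.ofReal |u x₁|) ^ q := by
            rw [e1]; exact ENNReal.rpow_le_rpow e2 hq0.le
        _ ≤ (2 : ℝ≥0∞) ^ (q - 1) * (ENNReal.ofReal |u x₁ - u y| ^ q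
              + ENNReal.ofReal |u x₁| ^ q) :=
            ENNReal.rpow_add_le_mul_rpow_add_rpow _ _ hq
        _ = (2 : ℝ≥0∞) ^ (q - 1) * (ker q u x₁ y + ENNReal.ofReal (|u x₁| ^ q)) := by
            unfold ker
            rw [ENNReal.ofReal_rpow_of_nonneg (abs_nonneg _) hq0.le,
              ENNReal.ofReal_rpow_of_nonneg (abs_nonneg _) hq0.le]
    calc (∫⁻ y in Ω, ((‖u y‖₊ : ℝ≥0∞)) ^ q)
        ≤ ∫⁻ y in Ω, (2 : ℝ≥0∞) ^ (q - 1) *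
            (ker q u x₁ y + ENNReal.ofReal (|u x₁| ^ q)) := lintegral_mono hbd
      _ = (2 : ℝ≥0∞) ^ (q - 1) * ((∫⁻ y in Ω, ker q u x₁ y)
            + ENNReal.ofReal (|u x₁| ^ q) * volume Ω) := by
          rw [lintegral_const_mul' _ _ (two_rpow_ne_top hq),
            lintegral_add_right' _ aemeasurable_const, setLIntegral_const]
      _ < ⊤ := by
          refine ENNReal.mul_lt_top (two_rpow_ne_top hq).lt_top ?_
          exact ENNReal.add_lt_top.2 ⟨hx₁,
            ENNReal.mul_lt_top ENNReal.ofReal_lt_top hμt.lt_top⟩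
  have hInt : Integrable u (volume.restrict Ω) :=
    hmem.integrable (by rw [← ENNReal.ofReal_one]; exact ENNReal.ofReal_le_ofReal hq)
  -- the Jensen step
  have hJ : ∀ x, ENNReal.ofReal (|u x - (⨍ y in Ω, u y)| ^ q) ≤
      (volume Ω)⁻¹ * ∫⁻ y in Ω, ker q u x y := by
    intro x
    have htR : (0:ℝ) < (volume Ω).toReal := ENNReal.toReal_pos hμ0 hμt
    have hint1 : Integrable (fun y => u x - u y) (volume.restrict Ω) :=
      (integrable_const _).sub hInt
    have habs : |u x - (⨍ y in Ω, u y)| ≤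
        (volume Ω).toReal⁻¹ * ∫ y in Ω, |u x - u y| := by
      have hm : u x - (⨍ y in Ω, u y) =
          (volume Ω).toReal⁻¹ * ∫ y in Ω, (u x - u y) := by
        rw [setAverage_eq, integral_sub (integrable_const _) hInt, setIntegral_const,
          smul_eq_mul, smul_eq_mul]
        simp only [measureReal_def]
        field_simp
      rw [hm, abs_mul, abs_of_nonneg (inv_nonneg.2 ENNReal.toReal_nonneg)]
      refine mul_le_mul_of_nonneg_left ?_ (inv_nonneg.2 ENNReal.toReal_nonneg)
      calc |∫ y in Ω, (u x - u y)| = ‖∫ y in Ω, (u x - u y)‖ := (Real.norm_eq_abs _).symm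
        _ ≤ ∫ y in Ω, ‖u x - u y‖ := norm_integral_le_integral_norm _
        _ = ∫ y in Ω, |u x - u y| := by simp [Real.norm_eq_abs]
    have hofi : ENNReal.ofReal (∫ y in Ω, |u x - u y|)
        = ∫⁻ y in Ω, ENNReal.ofReal |u x - u y| :=
      ofReal_integral_eq_lintegral_ofReal hint1.abs
        (Filter.Eventually.of_forall fun y => abs_nonneg _)
    have hinv : ENNReal.ofReal ((volume Ω).toReal⁻¹) = (volume Ω)⁻¹ := by
      rw [ENNReal.ofReal_inv_of_pos htR, ENNReal.ofReal_toReal hμt]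
    have hgm2 : AEMeasurable (fun y => ENNReal.ofReal |u x - u y|)
        (volume.restrict Ω) :=
      (ENNReal.measurable_ofReal.comp ((measurable_const.sub hu).abs)).aemeasurable
    have hjen := jen (volume.restrict Ω) hq hgm2
    calc ENNReal.ofReal (|u x - (⨍ y in Ω, u y)| ^ q)
        = ENNReal.ofReal |u x - (⨍ y in Ω, u y)| ^ q :=
          (ENNReal.ofReal_rpow_of_nonneg (abs_nonneg _) hq0.le).symm
      _ ≤ (ENNReal.ofReal ((volume Ω).toReal⁻¹ * ∫ y in Ω, |u x - u y|)) ^ q :=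
          ENNReal.rpow_le_rpow (ENNReal.ofReal_le_ofReal habs) hq0.le
      _ = ((volume Ω)⁻¹ * ∫⁻ y in Ω, ENNReal.ofReal |u x - u y|) ^ q := by
          rw [ENNReal.ofReal_mul (inv_nonneg.2 ENNReal.toReal_nonneg), hofi, hinv]
      _ = ((volume Ω)⁻¹) ^ q * (∫⁻ y in Ω, ENNReal.ofReal |u x - u y|) ^ q :=
          ENNReal.mul_rpow_of_nonneg _ _ hq0.le
      _ ≤ ((volume Ω)⁻¹) ^ q * ((∫⁻ y in Ω, ENNReal.ofReal |u x - u y| ^ q)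
            * ((volume.restrict Ω) Set.univ) ^ (q - 1)) :=
          mul_le_mul_right hjen _
      _ = (volume Ω)⁻¹ * ∫⁻ y in Ω, ker q u x y := by
          rw [Measure.restrict_apply_univ]
          have e1 : ∀ y : EuclideanSpace ℝ (Fin d),
              ENNReal.ofReal |u x - u y| ^ q = ker q u x y :=
            fun y => (ker_eq_rpow hq0.le u x y).symm
          simp_rw [e1]
          have ha1 : (volume Ω) ^ (q-1) = (volume Ω) ^ q * (volume Ω)⁻¹ := by
            rw [sub_eq_add_neg, ENNReal.rpow_add _ _ hμ0 hμt, ENNReal.rpow_neg_one]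
          rw [ENNReal.inv_rpow, ha1]
          have haq0 : (volume Ω) ^ q ≠ 0 :=
            (ENNReal.rpow_pos (pos_iff_ne_zero.mpr hμ0) hμt).ne'
          have haqt : (volume Ω) ^ q ≠ ⊤ := ENNReal.rpow_ne_top_of_nonneg hq0.le hμt
          calc ((volume Ω) ^ q)⁻¹ * ((∫⁻ y in Ω, ker q u x y) *
                ((volume Ω) ^ q * (volume Ω)⁻¹))
              = (((volume Ω) ^ q)⁻¹ * (volume Ω) ^ q) *
                ((volume Ω)⁻¹ * ∫⁻ y in Ω, ker q u x y) := by ring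
            _ = (volume Ω)⁻¹ * ∫⁻ y in Ω, ker q u x y := by
                rw [ENNReal.inv_mul_cancel haq0 haqt, one_mul]
  -- final assembly
  calc ∫⁻ x in Ω, ENNReal.ofReal (|u x - ⨍ y in Ω, u y| ^ q)
      ≤ ∫⁻ x in Ω, (volume Ω)⁻¹ * ∫⁻ y in Ω, ker q u x y :=
        lintegral_mono fun x => hJ x
    _ = (volume Ω)⁻¹ * Phi volume q u Ω Ω :=
        lintegral_const_mul' _ _ (ENNReal.inv_ne_top.2 hμ0)
    _ ≤ (volume Ω)⁻¹ * (K * D u) := mul_le_mul_right (hK u hu) _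
    _ ≤ (volume Ω)⁻¹ * (K * (ENNReal.ofReal (ϱ ^ ε) * Eint)) :=
        mul_le_mul_right (mul_le_mul_right (hDE u) _) _
    _ = Kfin * Eint := by rw [hKfin]; ring
    _ ≤ ENNReal.ofReal (Kfin.toReal + 1) * Eint := mul_le_mul_left hCle _
end

section
/- Let s ∈ (0,1), q ≥ 1, and let Ω ⊂ ℝ^d be a bounded open set (not necessarily connected). Then for every measurable u : Ω → ℝ, ∫_Ω |u(x) − m(u)|^q dx ≤ (diam(Ω)^{d+sq} / |Ω|) ∬_{Ω×Ω} |u(x)−u(y)|^q / |x−y|^{d+sq} dx dy, where m(u) is the mean of u over Ω. -/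
open MeasureTheory ENNReal Set Metric

lemma holder_aux {α : Type*} [MeasurableSpace α] (μ : Measure α) (f : α → ℝ)
    (hf : AEStronglyMeasurable f μ) {q : ℝ} (hq : 1 ≤ q) :
    (∫⁻ a, ENNReal.ofReal |f a| ∂μ) ≤
      (∫⁻ a, ENNReal.ofReal (|f a| ^ q) ∂μ) ^ (1/q) * (μ Set.univ) ^ (1 - 1/q) := by
  have hq0 : (0:ℝ) < q := lt_of_lt_of_le one_pos hq
  have h1q : (1:ℝ≥0∞) ≤ ENNReal.ofReal q := by
    rw [← ENNReal.ofReal_one]; exact ENNReal.ofReal_le_ofReal hq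
  have hne0 : ENNReal.ofReal q ≠ 0 := by
    simp [ENNReal.ofReal_eq_zero]; linarith
  have h := eLpNorm_le_eLpNorm_mul_rpow_measure_univ (p := 1) (q := ENNReal.ofReal q)
    h1q hf (μ := μ)
  rw [eLpNorm_one_eq_lintegral_enorm,
    eLpNorm_eq_lintegral_rpow_enorm_toReal hne0 ENNReal.ofReal_ne_top] at h
  simp only [ENNReal.toReal_ofReal hq0.le, ENNReal.toReal_one, one_div_one] at h
  calc (∫⁻ a, ENNReal.ofReal |f a| ∂μ)
      = ∫⁻ a, ‖f a‖ₑ ∂μ := by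
        simp_rw [Real.enorm_eq_ofReal_abs]
    _ ≤ (∫⁻ a, ‖f a‖ₑ ^ q ∂μ) ^ (1/q) * (μ Set.univ) ^ (1 - 1/q) := h
    _ = (∫⁻ a, ENNReal.ofReal (|f a| ^ q) ∂μ) ^ (1/q) * (μ Set.univ) ^ (1 - 1/q) := by
        congr 1
        congr 1
        refine lintegral_congr fun a => ?_
        rw [Real.enorm_eq_ofReal_abs, ← ENNReal.ofReal_rpow_of_nonneg (abs_nonneg _) hq0.le]

/-- Fractional Poincaré–Wirtinger inequality with the explicit constant
`diam(Ω)^{d+sq} / |Ω|`, valid on any bounded open set (no connectedness or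
boundary regularity needed). -/
theorem fractional_poincare_explicit
    (d : ℕ) (hd : 0 < d) (s q : ℝ)
    (hs : s ∈ Set.Ioo (0:ℝ) 1) (hq : 1 ≤ q)
    (Ω : Set (EuclideanSpace ℝ (Fin d))) (hΩo : IsOpen Ω)
    (hΩb : Bornology.IsBounded Ω) (hΩpos : 0 < volume Ω) :
    ∀ u : EuclideanSpace ℝ (Fin d) → ℝ, Measurable u →
      ∫⁻ x in Ω, ENNReal.ofReal (|u x - ⨍ y in Ω, u y| ^ q) ≤
        (ENNReal.ofReal (Metric.diam Ω ^ ((d:ℝ) + s * q)) / volume Ω) *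
          ∫⁻ x in Ω, ∫⁻ y in Ω,
            ENNReal.ofReal (|u x - u y| ^ q / dist x y ^ ((d:ℝ) + s * q)) := by
  intro u hu
  have hq0 : (0:ℝ) < q := lt_of_lt_of_le one_pos hq
  set p : ℝ := (d:ℝ) + s * q with hp_def
  have hp : 0 < p := by
    have h1 : (0:ℝ) < (d:ℝ) := by exact_mod_cast hd
    have h2 := mul_pos hs.1 hq0
    positivity
  set V : ℝ≥0∞ := volume Ω with hV_def
  have hV0 : V ≠ 0 := hΩpos.ne'
  have hVtop : V ≠ ⊤ := hΩb.measure_lt_top.ne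
  haveI : IsFiniteMeasure (volume.restrict Ω) :=
    ⟨by simpa [Measure.restrict_apply_univ] using hΩb.measure_lt_top⟩
  have hVuniv : (volume.restrict Ω) Set.univ = V := by
    simp [Measure.restrict_apply_univ, hV_def]
  -- diam positive
  have hdiam : 0 < Metric.diam Ω := by
    obtain ⟨x, hx⟩ := nonempty_of_measure_ne_zero hV0
    obtain ⟨r, hr, hball⟩ := Metric.isOpen_iff.mp hΩo x hx
    set v : EuclideanSpace ℝ (Fin d) := EuclideanSpace.single ⟨0, hd⟩ ((r/2 : ℝ)) with hv
    have hnv : ‖v‖ = r / 2 := by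
      rw [hv, EuclideanSpace.norm_single, Real.norm_eq_abs, abs_of_pos (by linarith)]
    have hy : x + v ∈ Ω := by
      apply hball
      rw [Metric.mem_ball, dist_eq_norm, add_sub_cancel_left, hnv]
      linarith
    have hdist : dist (x + v) x ≤ Metric.diam Ω := Metric.dist_le_diam_of_mem hΩb hy hx
    rw [dist_eq_norm, add_sub_cancel_left, hnv] at hdist
    linarith
  set C : ℝ≥0∞ := ENNReal.ofReal (Metric.diam Ω ^ p) with hC_def
  have hC0 : C ≠ 0 := by
    simp only [hC_def, ne_eq, ENNReal.ofReal_eq_zero, not_le]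
    positivity
  have hCtop : C ≠ ⊤ := ENNReal.ofReal_ne_top
  set F : EuclideanSpace ℝ (Fin d) → EuclideanSpace ℝ (Fin d) → ℝ≥0∞ :=
    fun x y => ENNReal.ofReal (|u x - u y| ^ q) with hF_def
  set G : EuclideanSpace ℝ (Fin d) → EuclideanSpace ℝ (Fin d) → ℝ≥0∞ :=
    fun x y => ENNReal.ofReal (|u x - u y| ^ q / dist x y ^ p) with hG_def
  set B : ℝ≥0∞ := ∫⁻ x in Ω, ∫⁻ y in Ω, F x y with hB_def
  set A : ℝ≥0∞ := ∫⁻ x in Ω, ∫⁻ y in Ω, G x y with hA_def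
  -- pointwise comparison
  have hFG : ∀ x ∈ Ω, ∀ y ∈ Ω, F x y ≤ C * G x y := by
    intro x hx y hy
    by_cases hxy : x = y
    · subst hxy
      simp [hF_def, Real.zero_rpow hq0.ne']
    · have hd0 : 0 < dist x y := dist_pos.mpr hxy
      have hdd : dist x y ≤ Metric.diam Ω := Metric.dist_le_diam_of_mem hΩb hx hy
      have hdp : dist x y ^ p ≤ Metric.diam Ω ^ p :=
        Real.rpow_le_rpow dist_nonneg hdd hp.le
      have hdp0 : 0 < dist x y ^ p := Real.rpow_pos_of_pos hd0 p
      have hreal : |u x - u y| ^ q ≤ Metric.diam Ω ^ p * (|u x - u y| ^ q / dist x y ^ p) := by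
        rw [mul_div_assoc']
        rw [le_div_iff₀ hdp0]
        have habs : (0:ℝ) ≤ |u x - u y| ^ q := Real.rpow_nonneg (abs_nonneg _) q
        calc |u x - u y| ^ q * dist x y ^ p ≤ |u x - u y| ^ q * Metric.diam Ω ^ p :=
              mul_le_mul_of_nonneg_left hdp habs
          _ = Metric.diam Ω ^ p * |u x - u y| ^ q := mul_comm _ _
      calc F x y ≤ ENNReal.ofReal (Metric.diam Ω ^ p * (|u x - u y| ^ q / dist x y ^ p)) :=
            ENNReal.ofReal_le_ofReal hreal
        _ = C * G x y := by
            rw [ENNReal.ofReal_mul (by positivity)]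
  have hBA : B ≤ C * A := by
    rw [hB_def, hA_def]
    calc (∫⁻ x in Ω, ∫⁻ y in Ω, F x y)
        ≤ ∫⁻ x in Ω, C * ∫⁻ y in Ω, G x y := by
          refine setLIntegral_mono' hΩo.measurableSet fun x hx => ?_
          rw [← lintegral_const_mul' C _ hCtop]
          exact setLIntegral_mono' hΩo.measurableSet fun y hy => hFG x hx y hy
      _ = C * ∫⁻ x in Ω, ∫⁻ y in Ω, G x y := lintegral_const_mul' C _ hCtop
  by_cases hB : B = ⊤
  · have hAtop : A = ⊤ := by
      by_contra hA
      have h2 : B < ⊤ := lt_of_le_of_lt hBA (ENNReal.mul_lt_top hCtop.lt_top (Ne.lt_top hA))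
      exact h2.ne hB
    have hCV : C / V ≠ 0 := ENNReal.div_ne_zero.mpr ⟨hC0, hVtop⟩
    rw [hAtop, ENNReal.mul_top hCV]
    exact le_top
  · -- find a point with finite inner integral, deduce integrability of u
    have hex : ∃ x₀, (∫⁻ y in Ω, F x₀ y) ≠ ⊤ := by
      by_contra h
      push_neg at h
      apply hB
      rw [hB_def]
      calc (∫⁻ x in Ω, ∫⁻ y in Ω, F x y) = ∫⁻ _x in Ω, ⊤ :=
            lintegral_congr fun x => h x
        _ = ⊤ := by rw [setLIntegral_const, ENNReal.top_mul hV0]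
    obtain ⟨x₀, hx₀⟩ := hex
    have h1q : (1:ℝ≥0∞) ≤ ENNReal.ofReal q := by
      rw [← ENNReal.ofReal_one]; exact ENNReal.ofReal_le_ofReal hq
    have hne0 : ENNReal.ofReal q ≠ 0 := by
      simp only [ne_eq, ENNReal.ofReal_eq_zero, not_le]; linarith
    have hmem1 : MemLp (fun y => u x₀ - u y) (ENNReal.ofReal q) (volume.restrict Ω) := by
      refine ⟨aestronglyMeasurable_const.sub hu.aestronglyMeasurable, ?_⟩
      rw [eLpNorm_eq_lintegral_rpow_enorm_toReal hne0 ENNReal.ofReal_ne_top]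
      refine ENNReal.rpow_lt_top_of_nonneg (by positivity) ?_
      simp only [ENNReal.toReal_ofReal hq0.le]
      have heq : (∫⁻ y in Ω, ‖u x₀ - u y‖ₑ ^ q) = ∫⁻ y in Ω, F x₀ y := by
        refine lintegral_congr fun y => ?_
        show ‖u x₀ - u y‖ₑ ^ q = ENNReal.ofReal (|u x₀ - u y| ^ q)
        rw [Real.enorm_eq_ofReal_abs, ENNReal.ofReal_rpow_of_nonneg (abs_nonneg _) hq0.le]
      rw [heq]
      exact hx₀
    have hmem : MemLp u (ENNReal.ofReal q) (volume.restrict Ω) := by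
      have h2 : MemLp (fun _ => u x₀) (ENNReal.ofReal q) (volume.restrict Ω) :=
        memLp_const _
      have h3 := h2.sub hmem1
      have he : ((fun _ => u x₀) - fun y => u x₀ - u y) = u := by
        funext y; simp
      rwa [he] at h3
    have hint : Integrable u (volume.restrict Ω) := hmem.integrable h1q
    set c : ℝ := ⨍ y in Ω, u y with hc_def
    have hVr : 0 < V.toReal := ENNReal.toReal_pos hV0 hVtop
    -- key pointwise estimate
    have hkey : ∀ x, ENNReal.ofReal (|u x - c| ^ q) ≤ (∫⁻ y in Ω, F x y) * V⁻¹ := by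
      intro x
      have hconst : Integrable (fun _ : EuclideanSpace ℝ (Fin d) => u x) (volume.restrict Ω) :=
        integrable_const _
      have hintsub : (∫ y in Ω, (u x - u y)) = V.toReal * u x - ∫ y in Ω, u y := by
        rw [integral_sub hconst hint, integral_const, measureReal_def, hVuniv, smul_eq_mul]
      have hcval : c = V.toReal⁻¹ * ∫ y in Ω, u y := by
        rw [hc_def, average_eq, measureReal_def, hVuniv, smul_eq_mul]
      have hre : |u x - c| * V.toReal ≤ ∫ y in Ω, |u x - u y| := by
        have e1 : |u x - c| * V.toReal = |(∫ y in Ω, (u x - u y))| := by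
          rw [hintsub, hcval, ← abs_of_pos hVr, ← abs_mul]
          congr 1
          field_simp
          rw [abs_of_pos hVr]; ring
        rw [e1]
        have h4 := norm_integral_le_integral_norm (μ := volume.restrict Ω)
          (fun y => u x - u y)
        simpa [Real.norm_eq_abs] using h4
      set J : ℝ≥0∞ := ∫⁻ y in Ω, ENNReal.ofReal |u x - u y| with hJ_def
      set Iq : ℝ≥0∞ := ∫⁻ y in Ω, F x y with hIq_def
      have haJ : ENNReal.ofReal |u x - c| * V ≤ J := by
        have h1 : ENNReal.ofReal (|u x - c| * V.toReal) ≤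
            ENNReal.ofReal (∫ y in Ω, |u x - u y|) := ENNReal.ofReal_le_ofReal hre
        rw [ENNReal.ofReal_mul (abs_nonneg _), ENNReal.ofReal_toReal hVtop] at h1
        refine h1.trans ?_
        calc ENNReal.ofReal (∫ y in Ω, |u x - u y|)
            ≤ ‖∫ y in Ω, |u x - u y|‖ₑ := by
              rw [Real.enorm_eq_ofReal_abs]
              exact ENNReal.ofReal_le_ofReal (le_abs_self _)
          _ ≤ ∫⁻ y in Ω, ‖|u x - u y|‖ₑ :=
              enorm_integral_le_lintegral_enorm _
          _ = J := by
              refine lintegral_congr fun y => ?_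
              rw [Real.enorm_eq_ofReal_abs, abs_abs]
      have hHol : J ≤ Iq ^ (1/q) * V ^ (1 - 1/q) := by
        have := holder_aux (volume.restrict Ω) (fun y => u x - u y)
          (aestronglyMeasurable_const.sub hu.aestronglyMeasurable) hq
        rw [hVuniv] at this
        exact this
      have hstep : ENNReal.ofReal |u x - c| ≤ Iq ^ (1/q) * V ^ (-(1/q)) := by
        have h2 : ENNReal.ofReal |u x - c| ≤ (Iq ^ (1/q) * V ^ (1 - 1/q)) / V := by
          rw [ENNReal.le_div_iff_mul_le (Or.inl hV0) (Or.inl hVtop)]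
          exact haJ.trans hHol
        refine h2.trans (le_of_eq ?_)
        rw [div_eq_mul_inv, mul_assoc, ← ENNReal.rpow_neg_one V,
          ← ENNReal.rpow_add _ _ hV0 hVtop]
        congr 2
        ring
      have hpow : ENNReal.ofReal (|u x - c| ^ q) ≤ Iq * V⁻¹ := by
        calc ENNReal.ofReal (|u x - c| ^ q)
            = (ENNReal.ofReal |u x - c|) ^ q := by
              rw [ENNReal.ofReal_rpow_of_nonneg (abs_nonneg _) hq0.le]
          _ ≤ (Iq ^ (1/q) * V ^ (-(1/q))) ^ q := by
              exact ENNReal.rpow_le_rpow hstep hq0.le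
          _ = Iq * V⁻¹ := by
              rw [ENNReal.mul_rpow_of_nonneg _ _ hq0.le, ← ENNReal.rpow_mul,
                ← ENNReal.rpow_mul]
              rw [one_div_mul_cancel hq0.ne', show -(1/q) * q = -1 by field_simp]
              rw [ENNReal.rpow_one, ENNReal.rpow_neg_one]
      exact hpow
    calc (∫⁻ x in Ω, ENNReal.ofReal (|u x - c| ^ q))
        ≤ ∫⁻ x in Ω, (∫⁻ y in Ω, F x y) * V⁻¹ := lintegral_mono hkey
      _ = B * V⁻¹ := by
          rw [hB_def]; exact lintegral_mul_const' _ _ (by simp [hV0])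
      _ ≤ C * A * V⁻¹ := mul_le_mul_left hBA _
      _ = C / V * A := by
          rw [div_eq_mul_inv, mul_right_comm]
end

section
/- Let Ω ⊂ ℝ^d be a bounded open set, set Q(Ω) := ℝ^{2d} \ ((ℝ^d \ Ω) × (ℝ^d \ Ω)), and let K : ℝ^d × ℝ^d → [0,+∞] be Borel-measurable. Then ∬_{Q(Ω)} min{1, |x−y|^q} K(x,y) dx dy < +∞ if and only if for every function u : ℝ^d → ℝ that is uniformly Lipschitz and bounded one has ∬_{Q(Ω)} |u(x)−u(y)|^q K(x,y) dx dy < +∞. -/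
open MeasureTheory ENNReal Set Metric

private lemma coord_abs_le_dist {d : ℕ} (x y : EuclideanSpace ℝ (Fin d)) (j : Fin d) :
    |x j - y j| ≤ dist x y := by
  rw [EuclideanSpace.dist_eq, ← Real.sqrt_sq_eq_abs]
  apply Real.sqrt_le_sqrt
  have := Finset.single_le_sum (f := fun i => dist (x i) (y i) ^ 2)
    (fun i _ => sq_nonneg _) (Finset.mem_univ j)
  simpa [Real.dist_eq, sq_abs] using this

private lemma coord_abs_le_norm {d : ℕ} (x : EuclideanSpace ℝ (Fin d)) (j : Fin d) :
    |x j| ≤ ‖x‖ := by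
  have := coord_abs_le_dist x 0 j
  simpa [dist_zero_right] using this

private lemma coord_lipschitz {d : ℕ} (j : Fin d) :
    LipschitzWith 1 (fun x : EuclideanSpace ℝ (Fin d) => x j) :=
  LipschitzWith.of_dist_le_mul fun x y => by
    rw [NNReal.coe_one, one_mul, Real.dist_eq]; exact coord_abs_le_dist x y j

private lemma exists_big_coord {d : ℕ} (hd : 0 < d) (x y : EuclideanSpace ℝ (Fin d)) :
    ∃ j : Fin d, dist x y ^ 2 / d ≤ (x j - y j) ^ 2 := by
  have hS : dist x y ^ 2 = ∑ i, (x i - y i) ^ 2 := by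
    rw [EuclideanSpace.dist_eq, Real.sq_sqrt (Finset.sum_nonneg fun i _ => sq_nonneg _)]
    simp [Real.dist_eq, sq_abs]
  obtain ⟨j, _, hj⟩ := Finset.exists_le_of_sum_le (s := (Finset.univ : Finset (Fin d)))
    (f := fun _ => dist x y ^ 2 / d) (g := fun i => (x i - y i) ^ 2)
    (Finset.univ_nonempty_iff.mpr ⟨⟨0, hd⟩⟩) (by
      rw [Finset.sum_const, ← hS]
      simp only [Finset.card_univ, Fintype.card_fin, nsmul_eq_mul]
      rw [mul_div_cancel₀]
      exact_mod_cast hd.ne')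
  exact ⟨j, hj⟩

noncomputable def clampR (R t : ℝ) : ℝ := max (-(R+1)) (min (R+1) t)

private lemma clampR_lipschitz (R : ℝ) : LipschitzWith 1 (clampR R) :=
  (LipschitzWith.id.const_min _).const_max _

private lemma clampR_abs_le (R : ℝ) (hR : 0 ≤ R) (t : ℝ) : |clampR R t| ≤ R + 1 := by
  rw [abs_le]
  exact ⟨le_max_left _ _, max_le (by linarith) (min_le_left _ _)⟩

private lemma clampR_eq (R t : ℝ) (h : |t| ≤ R + 1) : clampR R t = t := by
  rw [abs_le] at h
  rw [clampR, min_eq_right h.2, max_eq_right h.1]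

private lemma clampR_of_ge (R t : ℝ) (hR : 0 ≤ R) (h : R + 1 ≤ t) : clampR R t = R + 1 := by
  rw [clampR, min_eq_left h, max_eq_right (by linarith)]

private lemma clampR_of_le (R t : ℝ) (hR : 0 ≤ R) (h : t ≤ -(R + 1)) : clampR R t = -(R+1) := by
  rw [clampR, min_eq_right (by linarith), max_eq_left (by linarith)]

private lemma clampR_diff_ge {R a b : ℝ} (hR : 0 ≤ R) (ha : |a| ≤ R) :
    min 1 |a - b| ≤ |clampR R a - clampR R b| := by
  have haR : |a| ≤ R + 1 := by linarith
  rw [clampR_eq R a haR]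
  rw [abs_le] at ha
  rcases le_or_gt b (-(R+1)) with hb | hb
  · rw [clampR_of_le R b hR hb]
    have : (1:ℝ) ≤ a - -(R+1) := by linarith
    calc min 1 |a - b| ≤ 1 := min_le_left _ _
      _ ≤ |a - -(R+1)| := le_trans this (le_abs_self _)
  rcases le_or_gt (R+1) b with hb2 | hb2
  · rw [clampR_of_ge R b hR hb2]
    have : (1:ℝ) ≤ (R+1) - a := by linarith
    calc min 1 |a - b| ≤ 1 := min_le_left _ _
      _ ≤ |a - (R+1)| := by rw [abs_sub_comm]; exact le_trans this (le_abs_self _)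
  · rw [clampR_eq R b (abs_le.mpr ⟨hb.le, hb2.le⟩)]
    exact min_le_right _ _

private lemma key_pointwise {d : ℕ} (hd : 0 < d) {q : ℝ} (hq : 1 ≤ q) {R : ℝ} (hR : 0 ≤ R)
    (x y : EuclideanSpace ℝ (Fin d)) (hx : ‖x‖ ≤ R) :
    min 1 (dist x y ^ q) ≤ (d:ℝ) ^ (q/2) * ∑ j, |clampR R (x j) - clampR R (y j)| ^ q := by
  obtain ⟨j, hj⟩ := exists_big_coord hd x y
  have hdpos : (0:ℝ) < d := by exact_mod_cast hd
  have hd1 : (1:ℝ) ≤ d := by exact_mod_cast hd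
  have hxj : |x j| ≤ R := le_trans (coord_abs_le_norm x j) hx
  have hq0 : (0:ℝ) ≤ q := by linarith
  have hq2 : (0:ℝ) ≤ q/2 := by linarith
  have hterm : ∀ i : Fin d, 0 ≤ |clampR R (x i) - clampR R (y i)| ^ q :=
    fun i => Real.rpow_nonneg (abs_nonneg _) q
  have hsum : |clampR R (x j) - clampR R (y j)| ^ q
      ≤ ∑ i, |clampR R (x i) - clampR R (y i)| ^ q :=
    Finset.single_le_sum (fun i _ => hterm i) (Finset.mem_univ j)
  have hdq : (0:ℝ) ≤ (d:ℝ) ^ (q/2) := Real.rpow_nonneg hdpos.le _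
  rcases le_total (dist x y) 1 with hle | hge
  · have hyj : |y j| ≤ R + 1 := by
      have h1 := coord_abs_le_dist x y j
      have h2 : |y j| - |x j| ≤ |y j - x j| := abs_sub_abs_le_abs_sub _ _
      rw [abs_sub_comm] at h2
      linarith
    have hcx := clampR_eq R (x j) (by linarith)
    have hcy := clampR_eq R (y j) hyj
    have e1 : dist x y ^ q = (dist x y ^ 2) ^ (q/2 : ℝ) := by
      rw [← Real.rpow_natCast (dist x y) 2, ← Real.rpow_mul dist_nonneg]
      congr 1; push_cast; ring
    have e2 : ((x j - y j) ^ 2 : ℝ) ^ (q/2 : ℝ) = |x j - y j| ^ q := by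
      rw [← sq_abs, ← Real.rpow_natCast |x j - y j| 2, ← Real.rpow_mul (abs_nonneg _)]
      congr 1; push_cast; ring
    have h3 : dist x y ^ 2 ≤ d * (x j - y j) ^ 2 := by
      rw [div_le_iff₀ hdpos] at hj; linarith
    have h4 : dist x y ^ q ≤ (d:ℝ) ^ (q/2) * |x j - y j| ^ q := by
      rw [e1, ← e2, ← Real.mul_rpow hdpos.le (sq_nonneg _)]
      exact Real.rpow_le_rpow (sq_nonneg _) h3 hq2
    calc min 1 (dist x y ^ q) ≤ dist x y ^ q := min_le_right _ _
      _ ≤ (d:ℝ) ^ (q/2) * |x j - y j| ^ q := h4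
      _ = (d:ℝ) ^ (q/2) * |clampR R (x j) - clampR R (y j)| ^ q := by rw [hcx, hcy]
      _ ≤ _ := mul_le_mul_of_nonneg_left hsum hdq
  · have hsd : (1:ℝ) ≤ Real.sqrt d := by
      rw [show (1:ℝ) = Real.sqrt 1 by simp]
      exact Real.sqrt_le_sqrt hd1
    have hsd0 : (0:ℝ) < Real.sqrt d := by linarith
    have h5 : 1 / Real.sqrt d ≤ |x j - y j| := by
      have h6 : (1:ℝ) / d ≤ (x j - y j) ^ 2 := by
        have : (1:ℝ) ≤ dist x y ^ 2 := by nlinarith [dist_nonneg (x := x) (y := y)]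
        calc (1:ℝ)/d ≤ dist x y ^ 2 / d := by gcongr
          _ ≤ _ := hj
      calc 1 / Real.sqrt d = Real.sqrt (1/d) := by
            rw [one_div, one_div, Real.sqrt_inv]
        _ ≤ Real.sqrt ((x j - y j)^2) := Real.sqrt_le_sqrt h6
        _ = |x j - y j| := Real.sqrt_sq_eq_abs _
    have hmin : 1 / Real.sqrt d ≤ min 1 |x j - y j| :=
      le_min (by rw [div_le_one hsd0]; exact hsd) h5
    have hclamp := clampR_diff_ge (b := y j) hR hxj
    have h7 : (1 / Real.sqrt d) ^ q ≤ |clampR R (x j) - clampR R (y j)| ^ q :=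
      Real.rpow_le_rpow (by positivity) (le_trans hmin hclamp) hq0
    have h8 : (d:ℝ) ^ (q/2) * (1 / Real.sqrt d) ^ q = 1 := by
      have e : (1 / Real.sqrt d) = (d:ℝ) ^ (-(1/2) : ℝ) := by
        rw [Real.rpow_neg hdpos.le, Real.sqrt_eq_rpow, one_div]
      rw [e, ← Real.rpow_mul hdpos.le, ← Real.rpow_add hdpos,
        show q/2 + -(1/2)*q = 0 by ring, Real.rpow_zero]
    calc min 1 (dist x y ^ q) ≤ 1 := min_le_left _ _
      _ = (d:ℝ) ^ (q/2) * (1 / Real.sqrt d) ^ q := h8.symm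
      _ ≤ (d:ℝ) ^ (q/2) * |clampR R (x j) - clampR R (y j)| ^ q :=
          mul_le_mul_of_nonneg_left h7 hdq
      _ ≤ _ := mul_le_mul_of_nonneg_left hsum hdq

private lemma fwd_pointwise {E : Type*} [PseudoMetricSpace E] {q : ℝ} (hq : 1 ≤ q)
    {L : NNReal} {M : ℝ} {u : E → ℝ} (hL : LipschitzWith L u) (hM : ∀ x, |u x| ≤ M)
    (x y : E) :
    |u x - u y| ^ q ≤ (max (L:ℝ) (2*M)) ^ q * min 1 (dist x y ^ q) := by
  set C := max (L:ℝ) (2*M) with hC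
  have hC0 : 0 ≤ C := le_trans L.coe_nonneg (le_max_left _ _)
  have hq0 : (0:ℝ) ≤ q := by linarith
  have hdn : (0:ℝ) ≤ dist x y := dist_nonneg
  have hdd : dist (u x) (u y) = |u x - u y| := Real.dist_eq _ _
  rcases le_total (dist x y) 1 with hle | hge
  · have hmin : min 1 (dist x y ^ q) = dist x y ^ q :=
      min_eq_right (Real.rpow_le_one hdn hle hq0)
    have h1 : |u x - u y| ≤ C * dist x y := by
      calc |u x - u y| = dist (u x) (u y) := hdd.symm
        _ ≤ L * dist x y := hL.dist_le_mul x y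
        _ ≤ C * dist x y := mul_le_mul_of_nonneg_right (le_max_left _ _) hdn
    calc |u x - u y| ^ q ≤ (C * dist x y) ^ q :=
          Real.rpow_le_rpow (abs_nonneg _) h1 hq0
      _ = C ^ q * dist x y ^ q := Real.mul_rpow hC0 hdn
      _ = C ^ q * min 1 (dist x y ^ q) := by rw [hmin]
  · have hmin : min 1 (dist x y ^ q) = 1 :=
      min_eq_left (Real.one_le_rpow hge hq0)
    have h1 : |u x - u y| ≤ C := by
      have := abs_sub (u x) (u y)
      have h2 := hM x; have h3 := hM y
      calc |u x - u y| ≤ |u x| + |u y| := abs_sub _ _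
        _ ≤ 2*M := by linarith
        _ ≤ C := le_max_right _ _
    calc |u x - u y| ^ q ≤ C ^ q := Real.rpow_le_rpow (abs_nonneg _) h1 hq0
      _ = C ^ q * min 1 (dist x y ^ q) := by rw [hmin, mul_one]

private lemma lint_bound {α : Type*} [MeasurableSpace α] {μ : Measure α}
    {f g : α → ℝ≥0∞} {s : Set α} (hs : MeasurableSet s) (C : ℝ≥0∞) (hC : C ≠ ⊤)
    (h : ∀ a ∈ s, f a ≤ C * g a) (hg : ∫⁻ a in s, g a ∂μ ≠ ⊤) :
    ∫⁻ a in s, f a ∂μ ≠ ⊤ := by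
  have hle : ∫⁻ a in s, f a ∂μ ≤ C * ∫⁻ a in s, g a ∂μ := by
    rw [← lintegral_const_mul' _ _ hC]
    exact setLIntegral_mono' hs h
  exact ne_top_of_le_ne_top (ENNReal.mul_ne_top hC hg) hle

/-- Integrability of the kernel `K` against `min{1,|x-y|^q}` on
`Q(Ω) = ℝ^{2d} \ (Ω^c × Ω^c)` is equivalent to all bounded uniformly
Lipschitz functions having finite `K`-energy. -/
theorem kernel_integrability_iff_lipschitz_finite_energy
    (d : ℕ) (hd : 0 < d) (q : ℝ) (hq : 1 ≤ q)
    (Ω : Set (EuclideanSpace ℝ (Fin d))) (hΩo : IsOpen Ω)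
    (hΩb : Bornology.IsBounded Ω)
    (K : EuclideanSpace ℝ (Fin d) → EuclideanSpace ℝ (Fin d) → ℝ≥0∞)
    (hK : Measurable fun p : EuclideanSpace ℝ (Fin d) × EuclideanSpace ℝ (Fin d) => K p.1 p.2) :
    (∫⁻ p in {p : EuclideanSpace ℝ (Fin d) × EuclideanSpace ℝ (Fin d) | p.1 ∈ Ω ∨ p.2 ∈ Ω},
        ENNReal.ofReal (min 1 (dist p.1 p.2 ^ q)) * K p.1 p.2 ≠ ⊤) ↔
      ∀ u : EuclideanSpace ℝ (Fin d) → ℝ,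
        (∃ L : NNReal, LipschitzWith L u) → (∃ M : ℝ, ∀ x, |u x| ≤ M) →
        ∫⁻ p in {p : EuclideanSpace ℝ (Fin d) × EuclideanSpace ℝ (Fin d) | p.1 ∈ Ω ∨ p.2 ∈ Ω},
          ENNReal.ofReal (|u p.1 - u p.2| ^ q) * K p.1 p.2 ≠ ⊤ := by
  set s : Set (EuclideanSpace ℝ (Fin d) × EuclideanSpace ℝ (Fin d)) :=
    {p : EuclideanSpace ℝ (Fin d) × EuclideanSpace ℝ (Fin d) | p.1 ∈ Ω ∨ p.2 ∈ Ω} with hs_def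
  have hs : MeasurableSet s :=
    (measurable_fst hΩo.measurableSet).union (measurable_snd hΩo.measurableSet)
  constructor
  · rintro hfin u ⟨L, hL⟩ ⟨M, hM⟩
    have hCq : (0:ℝ) ≤ (max (L:ℝ) (2*M)) ^ q :=
      Real.rpow_nonneg (le_trans L.coe_nonneg (le_max_left _ _)) q
    refine lint_bound hs (ENNReal.ofReal ((max (L:ℝ) (2*M)) ^ q)) ofReal_ne_top
      (fun p _ => ?_) hfin
    calc ENNReal.ofReal (|u p.1 - u p.2| ^ q) * K p.1 p.2
        ≤ (ENNReal.ofReal ((max (L:ℝ) (2*M)) ^ q)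
            * ENNReal.ofReal (min 1 (dist p.1 p.2 ^ q))) * K p.1 p.2 := by
          refine mul_le_mul_left ?_ _
          rw [← ENNReal.ofReal_mul hCq]
          exact ENNReal.ofReal_le_ofReal (fwd_pointwise hq hL hM p.1 p.2)
      _ = ENNReal.ofReal ((max (L:ℝ) (2*M)) ^ q)
            * (ENNReal.ofReal (min 1 (dist p.1 p.2 ^ q)) * K p.1 p.2) := mul_assoc _ _ _
  · intro H
    obtain ⟨R0, hΩR0⟩ := hΩb.subset_closedBall 0
    set R := max R0 0 with hR_def
    have hR : 0 ≤ R := le_max_right _ _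
    have hΩR : Ω ⊆ closedBall 0 R :=
      hΩR0.trans (closedBall_subset_closedBall (le_max_left _ _))
    -- energies of the clamped coordinate functions are finite
    have hE : ∀ j : Fin d,
        ∫⁻ p in s, ENNReal.ofReal (|clampR R (p.1 j) - clampR R (p.2 j)| ^ q) * K p.1 p.2 ≠ ⊤ := by
      intro j
      exact H (fun x => clampR R (x j))
        ⟨1, by simpa [Function.comp_def] using (clampR_lipschitz R).comp (coord_lipschitz j)⟩
        ⟨R + 1, fun x => clampR_abs_le R hR _⟩
    -- measurability of each term
    have hmeas : ∀ j : Fin d, Measurable (fun p : EuclideanSpace ℝ (Fin d) × EuclideanSpace ℝ (Fin d) =>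
        ENNReal.ofReal (|clampR R (p.1 j) - clampR R (p.2 j)| ^ q) * K p.1 p.2) := by
      intro j
      refine Measurable.mul ?_ hK
      refine Measurable.ennreal_ofReal ?_
      have hc : Continuous (fun p : EuclideanSpace ℝ (Fin d) × EuclideanSpace ℝ (Fin d) =>
          |clampR R (p.1 j) - clampR R (p.2 j)|) :=
        ((((clampR_lipschitz R).comp (coord_lipschitz j)).continuous.comp continuous_fst).sub
          (((clampR_lipschitz R).comp (coord_lipschitz j)).continuous.comp
            continuous_snd)).abs
      exact ((Real.continuous_rpow_const (by linarith)).comp hc).measurable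
    have hg : ∫⁻ p in s, ∑ j : Fin d,
        ENNReal.ofReal (|clampR R (p.1 j) - clampR R (p.2 j)| ^ q) * K p.1 p.2 ≠ ⊤ := by
      rw [lintegral_finset_sum _ (fun j _ => hmeas j)]
      exact (ENNReal.sum_lt_top.mpr (fun j _ => (hE j).lt_top)).ne
    refine lint_bound hs (ENNReal.ofReal ((d:ℝ) ^ (q/2 : ℝ))) ofReal_ne_top
      (fun p hp => ?_) hg
    have hterm : ∀ i : Fin d, 0 ≤ |clampR R (p.1 i) - clampR R (p.2 i)| ^ q :=
      fun i => Real.rpow_nonneg (abs_nonneg _) q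
    have hkey : min 1 (dist p.1 p.2 ^ q)
        ≤ (d:ℝ) ^ (q/2) * ∑ j, |clampR R (p.1 j) - clampR R (p.2 j)| ^ q := by
      rcases hp with hp1 | hp2
      · exact key_pointwise hd hq hR p.1 p.2 (mem_closedBall_zero_iff.mp (hΩR hp1))
      · have := key_pointwise hd hq hR p.2 p.1 (mem_closedBall_zero_iff.mp (hΩR hp2))
        rw [dist_comm] at this
        simpa [abs_sub_comm] using this
    calc ENNReal.ofReal (min 1 (dist p.1 p.2 ^ q)) * K p.1 p.2
        ≤ ENNReal.ofReal ((d:ℝ) ^ (q/2)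
            * ∑ j, |clampR R (p.1 j) - clampR R (p.2 j)| ^ q) * K p.1 p.2 :=
          mul_le_mul_left (ENNReal.ofReal_le_ofReal hkey) _
      _ = (ENNReal.ofReal ((d:ℝ) ^ (q/2 : ℝ))
            * ∑ j, ENNReal.ofReal (|clampR R (p.1 j) - clampR R (p.2 j)| ^ q)) * K p.1 p.2 := by
          rw [ENNReal.ofReal_mul (Real.rpow_nonneg (Nat.cast_nonneg d) _),
            ENNReal.ofReal_sum_of_nonneg (fun i _ => hterm i)]
      _ = ENNReal.ofReal ((d:ℝ) ^ (q/2 : ℝ))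
            * ∑ j, ENNReal.ofReal (|clampR R (p.1 j) - clampR R (p.2 j)| ^ q) * K p.1 p.2 := by
          rw [mul_assoc, Finset.sum_mul]
end

section
/- Let Γ : ℝ → (−∞,+∞] be a proper lower semicontinuous function, let π : ℝ → ℝ be C_π-Lipschitz with π(0) = 0, and set Π(r) := ∫_0^r π(z) dz. Assume Γ(r) + Π(r) ≥ −a_1 |r|^p − a_2 for all r ∈ ℝ, with a_1, a_2 ≥ 0 and p ∈ (0,2). Then there exist λ_0, α, β, a_3 > 0, depending only on C_π, a_1, a_2, such that the Moreau envelope Γ_λ(r) := inf_{z∈ℝ} { Γ(z) + |z−r|²/(2λ) } satisfies Γ_λ(r) + Π(r) ≥ −α λ^{1/2} r² − a_3 |r|^p − β for every λ ∈ (0, λ_0) and every r ∈ ℝ. -/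
set_option maxHeartbeats 1000000


open MeasureTheory Set Filter

lemma core_ineq (C a₁ a₂ p lam d R : ℝ) (hC : 0 ≤ C) (ha₁ : 0 ≤ a₁) (ha₂ : 0 ≤ a₂)
    (hp0 : 0 < p) (hp2 : p ≤ 2) (hd : 0 ≤ d) (hR : 0 ≤ R) (hlam : 0 < lam)
    (h1 : lam ≤ 1) (h2 : lam ≤ 1/(4*(C+1))) (h3 : lam ≤ 1/(32*(a₁+1))) :
    -((8*C^2+1) * Real.sqrt lam * R^2) - (4*a₁+1) * R^p - (a₂+4*a₁+1)
      ≤ -a₁ * (d + R)^p - a₂ - C*(R+d)*d + d^2/(2*lam) := by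
  set s := Real.sqrt lam with hs
  have hs0 : 0 ≤ s := Real.sqrt_nonneg _
  have hs2 : s^2 = lam := Real.sq_sqrt hlam.le
  have hs1 : s ≤ 1 := by
    rw [hs, show (1:ℝ) = Real.sqrt 1 by simp]
    exact Real.sqrt_le_sqrt h1
  have hls : lam ≤ s := by nlinarith
  set t := d^2/(2*lam) with htdef
  have ht0 : 0 ≤ t := by positivity
  have hd2 : d^2 = 2*lam*t := by rw [htdef]; field_simp
  have hCl : lam * C ≤ 1/4 := by
    have h4 : 0 < 4*(C+1) := by linarith
    have := (le_div_iff₀ h4).mp h2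
    nlinarith
  have hal : lam * a₁ ≤ 1/32 := by
    have h4 : 0 < 32*(a₁+1) := by linarith
    have := (le_div_iff₀ h4).mp h3
    nlinarith
  have hpow1 : (d + R)^p ≤ 4*(d^2 + 1 + R^p) := by
    have hM0 : 0 ≤ max d R := le_trans hd (le_max_left _ _)
    have h1' : (d + R)^p ≤ (2 * max d R)^p := by
      apply Real.rpow_le_rpow (by linarith) _ hp0.le
      rcases le_total d R with h | h
      · have : max d R = R := max_eq_right h
        rw [this]; linarith
      · have : max d R = d := max_eq_left h
        rw [this]; linarith
    have h2' : (2 * max d R)^p = 2^p * (max d R)^p := Real.mul_rpow (by norm_num) hM0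
    have h3' : (2:ℝ)^p ≤ 4 := by
      have : (2:ℝ)^p ≤ (2:ℝ)^(2:ℝ) := Real.rpow_le_rpow_of_exponent_le one_le_two hp2
      have h4 : (2:ℝ)^(2:ℝ) = 4 := by
        rw [show (2:ℝ) = ((2:ℕ):ℝ) by norm_num, Real.rpow_natCast]; norm_num
      linarith
    have h5' : (max d R)^p ≤ d^p + R^p := by
      rcases le_total d R with h | h
      · rw [max_eq_right h]
        have := Real.rpow_nonneg hd p
        linarith
      · rw [max_eq_left h]
        have := Real.rpow_nonneg hR p
        linarith
    have h6' : d^p ≤ d^2 + 1 := by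
      rcases le_total d 1 with h | h
      · have : d^p ≤ 1 := Real.rpow_le_one hd h hp0.le
        nlinarith
      · have h7 : d^p ≤ d^(2:ℝ) := Real.rpow_le_rpow_of_exponent_le h hp2
        rw [show (2:ℝ) = ((2:ℕ):ℝ) by norm_num, Real.rpow_natCast] at h7
        linarith
    have hMp0 : 0 ≤ (max d R)^p := Real.rpow_nonneg hM0 p
    nlinarith [Real.rpow_nonneg hR p]
  have hRp : 0 ≤ R^p := Real.rpow_nonneg hR p
  have e0 : a₁ * (d+R)^p ≤ 4*a₁*(d^2+1+R^p) := by nlinarith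
  have e1 : C * d^2 ≤ t/2 := by nlinarith [mul_le_mul_of_nonneg_right hCl ht0]
  have e2 : a₁ * d^2 ≤ t/16 := by nlinarith [mul_le_mul_of_nonneg_right hal ht0]
  have e3' : 8*lam*(C*R*d) ≤ 8*lam*(t/4 + 2*s*C^2*R^2) := by
    nlinarith [sq_nonneg (d - 4*lam*C*R),
      mul_nonneg (mul_nonneg (by linarith : (0:ℝ) ≤ 8*lam) (sub_nonneg.2 hls)) (sq_nonneg (C*R))]
  have e3 : C*R*d ≤ t/4 + 2*s*C^2*R^2 :=
    le_of_mul_le_mul_left (by linarith) (by positivity : (0:ℝ) < 8*lam)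
  nlinarith [mul_nonneg (mul_nonneg (sq_nonneg C) hs0) (sq_nonneg R),
    mul_nonneg hs0 (sq_nonneg R), mul_nonneg ha₁ hRp]

/-- Coercivity estimate for the Moreau regularization: if `Γ + Π ≥ -a₁|r|^p - a₂`
with `p ∈ (0,2)`, then the Moreau envelope satisfies
`Γ_λ + Π ≥ -α √λ r² - a₃ |r|^p - β` for small `λ`. -/
theorem moreau_coercivity_subquadratic
    (Γ : ℝ → EReal) (hbot : ∀ r, Γ r ≠ ⊥) (hproper : ∃ r, Γ r ≠ ⊤)
    (hlsc : LowerSemicontinuous Γ)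
    (Cπ : ℝ) (π : ℝ → ℝ) (hπ : LipschitzWith (Real.toNNReal Cπ) π) (hπ0 : π 0 = 0)
    (a₁ a₂ p : ℝ) (ha₁ : 0 ≤ a₁) (ha₂ : 0 ≤ a₂) (hp : p ∈ Set.Ioo (0:ℝ) 2)
    (hbound : ∀ r : ℝ,
      ((-a₁ * |r| ^ p - a₂ : ℝ) : EReal) ≤ Γ r + ((∫ z in (0:ℝ)..r, π z : ℝ) : EReal)) :
    ∃ lam₀ > (0:ℝ), ∃ α > (0:ℝ), ∃ β > (0:ℝ), ∃ a₃ > (0:ℝ),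
      ∀ lam : ℝ, 0 < lam → lam < lam₀ → ∀ r : ℝ,
        ((-(α * Real.sqrt lam * r ^ 2) - a₃ * |r| ^ p - β : ℝ) : EReal) ≤
          (⨅ z : ℝ, Γ z + (((z - r) ^ 2 / (2 * lam) : ℝ) : EReal)) +
            ((∫ z in (0:ℝ)..r, π z : ℝ) : EReal) := by
  obtain ⟨hp0, hp2⟩ := hp
  set C : ℝ := (Real.toNNReal Cπ : ℝ) with hCdef
  have hC : 0 ≤ C := (Real.toNNReal Cπ).coe_nonneg
  have hπabs : ∀ x : ℝ, |π x| ≤ C * |x| := by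
    intro x
    have := hπ.dist_le_mul x 0
    simpa [Real.dist_eq, hπ0, hCdef] using this
  have hπint : ∀ a b : ℝ, IntervalIntegrable π volume a b :=
    fun a b => (hπ.continuous).intervalIntegrable a b
  have hC1 : (0:ℝ) < 1/(4*(C+1)) := by positivity
  have hA1 : (0:ℝ) < 1/(32*(a₁+1)) := by positivity
  refine ⟨min 1 (min (1/(4*(C+1))) (1/(32*(a₁+1)))), by
      simp only [lt_min_iff]; exact ⟨one_pos, hC1, hA1⟩,
    8*C^2+1, by positivity, a₂+4*a₁+1, by positivity, 4*a₁+1, by positivity, ?_⟩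
  intro lam hlam hlam0 r
  have hlam1 : lam ≤ 1 := le_of_lt (lt_of_lt_of_le hlam0 (min_le_left _ _))
  have hlam2 : lam ≤ 1/(4*(C+1)) :=
    le_of_lt (lt_of_lt_of_le hlam0 ((min_le_right _ _).trans (min_le_left _ _)))
  have hlam3 : lam ≤ 1/(32*(a₁+1)) :=
    le_of_lt (lt_of_lt_of_le hlam0 ((min_le_right _ _).trans (min_le_right _ _)))
  set c : ℝ := ∫ z in (0:ℝ)..r, π z with hc
  set b : ℝ := -((8*C^2+1) * Real.sqrt lam * r^2) - (4*a₁+1)*|r|^p - (a₂+4*a₁+1) with hb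
  have key : ((b - c : ℝ) : EReal) ≤ ⨅ z : ℝ, Γ z + (((z - r)^2/(2*lam) : ℝ) : EReal) := by
    refine le_iInf fun z => ?_
    by_cases htop : Γ z = ⊤
    · rw [htop]
      simp
    · have hg : ((Γ z).toReal : EReal) = Γ z := EReal.coe_toReal htop (hbot z)
      set g := (Γ z).toReal with hgdef
      have hzb : -a₁ * |z|^p - a₂ ≤ g + ∫ t in (0:ℝ)..z, π t := by
        have h := hbound z
        rw [← hg, ← EReal.coe_add] at h
        exact_mod_cast h
      rw [← hg, ← EReal.coe_add, EReal.coe_le_coe_iff]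
      set Pz : ℝ := ∫ t in (0:ℝ)..z, π t with hPz
      set d : ℝ := |z - r| with hdd
      have hd0 : 0 ≤ d := abs_nonneg _
      -- bound on Π difference
      have hPdiff : |c - Pz| ≤ C * (|r| + d) * d := by
        have hsplit : (∫ t in (0:ℝ)..z, π t) + (∫ t in z..r, π t) = ∫ t in (0:ℝ)..r, π t :=
          intervalIntegral.integral_add_adjacent_intervals (hπint 0 z) (hπint z r)
        have hcP : c - Pz = ∫ t in z..r, π t := by rw [hc, hPz, ← hsplit]; ring
        rw [hcP]
        have hbnd : ∀ x ∈ Set.uIoc z r, ‖π x‖ ≤ C * (|r| + d) := by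
          intro x hx
          have hx' : x ∈ Set.uIcc z r := Set.Ioc_subset_Icc_self hx
          rw [Set.mem_uIcc] at hx'
          have hxabs : |x| ≤ |r| + d := by
            have hz : |z| ≤ |r| + d := by
              have : |z| = |r + (z - r)| := by ring_nf
              rw [this]
              calc |r + (z - r)| ≤ |r| + |z - r| := abs_add_le _ _
                _ = |r| + d := by rw [hdd]
            rcases hx' with ⟨h1, h2⟩ | ⟨h1, h2⟩
            · rw [abs_le]; constructor
              · have := neg_abs_le z; linarith
              · have h3 := le_abs_self r; have h4 : (0:ℝ) ≤ d := hd0; linarith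
            · rw [abs_le]; constructor
              · have := neg_abs_le r; have h4 : (0:ℝ) ≤ d := hd0; linarith
              · have := le_abs_self z; linarith
          calc ‖π x‖ = |π x| := rfl
            _ ≤ C * |x| := hπabs x
            _ ≤ C * (|r| + d) := by
                apply mul_le_mul_of_nonneg_left hxabs hC
        have := intervalIntegral.norm_integral_le_of_norm_le_const hbnd
        calc |∫ t in z..r, π t| ≤ C * (|r| + d) * |r - z| := this
          _ = C * (|r| + d) * d := by rw [hdd, abs_sub_comm]
      -- |z| ≤ d + |r|
      have hzabs : |z| ≤ d + |r| := by
        have : |z| = |(z - r) + r| := by ring_nf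
        rw [this]
        calc |(z - r) + r| ≤ |z - r| + |r| := abs_add_le _ _
          _ = d + |r| := by rw [hdd]
      have hzp : |z|^p ≤ (d + |r|)^p :=
        Real.rpow_le_rpow (abs_nonneg z) hzabs hp0.le
      have hcore := core_ineq C a₁ a₂ p lam d |r| hC ha₁ ha₂ hp0 hp2.le hd0 (abs_nonneg r)
        hlam hlam1 hlam2 hlam3
      have hsq : (z - r)^2 = d^2 := by rw [hdd, sq_abs]
      have habs1 : |c - Pz| ≤ C * (|r| + d) * d := hPdiff
      have h1 : c - Pz ≥ -(C * (|r| + d) * d) := by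
        have := abs_le.mp habs1
        linarith [this.1]
      have hr2 : |r|^2 = r^2 := sq_abs r
      rw [hsq]
      have hstep : -a₁ * (d + |r|)^p - a₂ - C*(|r|+d)*d ≤ g + c := by
        have h2 : -a₁ * |z|^p ≥ -a₁ * (d + |r|)^p := by nlinarith
        have : g + c = (g + Pz) + (c - Pz) := by ring
        rw [this]
        have h3 : g + Pz ≥ -a₁ * |z|^p - a₂ := hzb
        linarith
      rw [hb]
      rw [← hr2]
      linarith
  have hbc : ((b : ℝ) : EReal) = ((b - c : ℝ) : EReal) + ((c : ℝ) : EReal) := by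
    rw [← EReal.coe_add]; norm_num
  rw [hbc]
  exact add_le_add_left key _
end

section
/- Let Γ : ℝ → (−∞,+∞] be a proper lower semicontinuous function, let π : ℝ → ℝ be C_π-Lipschitz with π(0) = 0, and set Π(r) := ∫_0^r π(z) dz. Assume Γ(r) + Π(r) ≥ −a_1 r² − a_2 for all r ∈ ℝ, with a_1, a_2 ≥ 0. Then there exist λ_0, α, β > 0, depending only on C_π, a_1, a_2, such that Γ_λ(r) + Π(r) ≥ −2 a_1 r² − α λ^{1/2} r² − β for every λ ∈ (0, λ_0) and every r ∈ ℝ, where Γ_λ is the Moreau envelope of Γ. -/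
set_option maxHeartbeats 1000000


open MeasureTheory Set Filter

/-- Coercivity estimate for the Moreau regularization, quadratic version: if
`Γ + Π ≥ -a₁ r² - a₂`, then `Γ_λ + Π ≥ -2a₁ r² - α √λ r² - β` for small `λ`. -/
theorem moreau_coercivity_quadratic
    (Γ : ℝ → EReal) (hbot : ∀ r, Γ r ≠ ⊥) (hproper : ∃ r, Γ r ≠ ⊤)
    (hlsc : LowerSemicontinuous Γ)
    (Cπ : ℝ) (π : ℝ → ℝ) (hπ : LipschitzWith (Real.toNNReal Cπ) π) (hπ0 : π 0 = 0)
    (a₁ a₂ : ℝ) (ha₁ : 0 ≤ a₁) (ha₂ : 0 ≤ a₂)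
    (hbound : ∀ r : ℝ,
      ((-a₁ * r ^ 2 - a₂ : ℝ) : EReal) ≤ Γ r + ((∫ z in (0:ℝ)..r, π z : ℝ) : EReal)) :
    ∃ lam₀ > (0:ℝ), ∃ α > (0:ℝ), ∃ β > (0:ℝ),
      ∀ lam : ℝ, 0 < lam → lam < lam₀ → ∀ r : ℝ,
        ((-(2 * a₁) * r ^ 2 - α * Real.sqrt lam * r ^ 2 - β : ℝ) : EReal) ≤
          (⨅ z : ℝ, Γ z + (((z - r) ^ 2 / (2 * lam) : ℝ) : EReal)) +
            ((∫ z in (0:ℝ)..r, π z : ℝ) : EReal) := by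
  set C : ℝ := max Cπ 0 with hCdef
  have hC0 : 0 ≤ C := le_max_right _ _
  have hπcont : Continuous π := hπ.continuous
  have hπb : ∀ t : ℝ, |π t| ≤ C * |t| := by
    intro t
    have h := hπ.dist_le_mul t 0
    simp only [Real.dist_eq, hπ0, sub_zero, sub_self] at h
    calc |π t| ≤ (Real.toNNReal Cπ : ℝ) * |t| := by simpa using h
      _ = C * |t| := by rw [Real.coe_toNNReal']
  set M : ℝ := a₁ + C with hMdef
  have hM0 : 0 ≤ M := by positivity
  set K : ℝ := 2 * a₁ + 2 * C with hKdef
  have hK0 : 0 ≤ K := by positivity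
  set lam₀ : ℝ := 1 / (4 * M + 1) with hlam₀def
  have hlam₀pos : 0 < lam₀ := by positivity
  set α : ℝ := K ^ 2 * Real.sqrt lam₀ + 1 with hαdef
  have hαpos : 0 < α := by positivity
  set β : ℝ := a₂ + 1 with hβdef
  have hβpos : 0 < β := by positivity
  refine ⟨lam₀, hlam₀pos, α, hαpos, β, hβpos, ?_⟩
  intro lam hlam hlamlt r
  set Φ : ℝ → ℝ := fun s => ∫ z in (0:ℝ)..s, π z with hΦdef
  -- difference bound for Φ
  have hΦdiff : ∀ z : ℝ, |Φ r - Φ z| ≤ C * (|z| + |r|) * |z - r| := by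
    intro z
    have hint : Φ r - Φ z = ∫ t in z..r, π t := by
      have h := intervalIntegral.integral_add_adjacent_intervals
        (hπcont.intervalIntegrable (μ := volume) 0 z) (hπcont.intervalIntegrable (μ := volume) z r)
      simp only [hΦdef]
      linarith [h]
    rw [hint]
    have hb : ∀ t ∈ Set.uIoc z r, ‖π t‖ ≤ C * (|z| + |r|) := by
      intro t ht
      rw [Set.mem_uIoc] at ht
      have habs : |t| ≤ |z| + |r| := by
        rcases ht with ⟨h1, h2⟩ | ⟨h1, h2⟩ <;>
          rcases abs_cases z with ⟨hz1, _⟩ | ⟨hz1, _⟩ <;>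
          rcases abs_cases r with ⟨hr1, _⟩ | ⟨hr1, _⟩ <;>
          rcases abs_cases t with ⟨ht1, _⟩ | ⟨ht1, _⟩ <;> linarith
      calc ‖π t‖ = |π t| := rfl
        _ ≤ C * |t| := hπb t
        _ ≤ C * (|z| + |r|) := by
            apply mul_le_mul_of_nonneg_left habs hC0
    have := intervalIntegral.norm_integral_le_of_norm_le_const hb
    calc |∫ t in z..r, π t| = ‖∫ t in z..r, π t‖ := rfl
      _ ≤ C * (|z| + |r|) * |r - z| := this
      _ = C * (|z| + |r|) * |z - r| := by rw [abs_sub_comm]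
  -- the main scalar inequality
  have key : ∀ z : ℝ,
      -(2 * a₁) * r ^ 2 - α * Real.sqrt lam * r ^ 2 - β - Φ r ≤
        (-a₁ * z ^ 2 - a₂ - Φ z) + (z - r) ^ 2 / (2 * lam) := by
    intro z
    set d : ℝ := z - r with hd
    have hp := hΦdiff z
    have e1 : -(C * (|z| + |r|) * |d|) ≤ Φ r - Φ z := by
      have := neg_abs_le (Φ r - Φ z)
      linarith
    have hzd : z = r + d := by rw [hd]; ring
    have hz : |z| ≤ |r| + |d| := by rw [hzd]; exact abs_add_le r d
    have e2 : C * (|z| + |r|) * |d| ≤ 2 * C * |r| * |d| + C * d ^ 2 := by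
      have h1 : C * (|z| + |r|) * |d| ≤ C * (2 * |r| + |d|) * |d| := by
        apply mul_le_mul_of_nonneg_right _ (abs_nonneg d)
        apply mul_le_mul_of_nonneg_left _ hC0
        linarith
      have h2 : |d| * |d| = d ^ 2 := by rw [← sq_abs d]; ring
      nlinarith [h1, h2]
    have hrd : r * d ≤ |r| * |d| := by
      calc r * d ≤ |r * d| := le_abs_self _
        _ = |r| * |d| := abs_mul r d
    have e3 : -a₁ * r ^ 2 - 2 * a₁ * (|r| * |d|) - a₁ * d ^ 2 ≤ -a₁ * z ^ 2 := by
      have : z ^ 2 = r ^ 2 + 2 * (r * d) + d ^ 2 := by rw [hzd]; ring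
      nlinarith [mul_le_mul_of_nonneg_left hrd ha₁]
    have h4M : 4 * M * lam ≤ 1 := by
      have : lam * (4 * M + 1) < 1 := by
        rw [hlam₀def] at hlamlt
        calc lam * (4 * M + 1) < (1 / (4 * M + 1)) * (4 * M + 1) := by
              apply mul_lt_mul_of_pos_right hlamlt; positivity
          _ = 1 := by field_simp
      nlinarith [hlam.le]
    have e4a : M * d ^ 2 ≤ d ^ 2 / (4 * lam) := by
      rw [le_div_iff₀ (by positivity : (0:ℝ) < 4 * lam)]
      nlinarith [mul_le_mul_of_nonneg_right h4M (sq_nonneg d)]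
    have e4b : d ^ 2 / (2 * lam) = d ^ 2 / (4 * lam) + d ^ 2 / (4 * lam) := by
      field_simp
      ring
    have e4 : d ^ 2 / (4 * lam) ≤ d ^ 2 / (2 * lam) - M * d ^ 2 := by linarith
    have e5 : K * |r| * |d| - lam * K ^ 2 * r ^ 2 ≤ d ^ 2 / (4 * lam) := by
      rw [le_div_iff₀ (by positivity : (0:ℝ) < 4 * lam)]
      rw [← sq_abs r, ← sq_abs d]
      nlinarith [sq_nonneg (|d| - 2 * lam * K * |r|), hlam.le, abs_nonneg r, abs_nonneg d, hK0]
    have e6 : lam * K ^ 2 ≤ α * Real.sqrt lam := by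
      have hs : Real.sqrt lam ≤ Real.sqrt lam₀ := Real.sqrt_le_sqrt hlamlt.le
      have hsq : Real.sqrt lam * Real.sqrt lam = lam := Real.mul_self_sqrt hlam.le
      have h1 : K ^ 2 * Real.sqrt lam * Real.sqrt lam ≤ K ^ 2 * Real.sqrt lam * Real.sqrt lam₀ := by
        apply mul_le_mul_of_nonneg_left hs (by positivity)
      have h2 : (0:ℝ) ≤ Real.sqrt lam := Real.sqrt_nonneg lam
      nlinarith [h1, h2, hsq]
    have e6' : lam * K ^ 2 * r ^ 2 ≤ α * Real.sqrt lam * r ^ 2 :=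
      mul_le_mul_of_nonneg_right e6 (sq_nonneg r)
    have ha₁r : 0 ≤ a₁ * r ^ 2 := mul_nonneg ha₁ (sq_nonneg r)
    -- combine everything
    have hKexp : K * |r| * |d| = 2 * a₁ * (|r| * |d|) + 2 * C * |r| * |d| := by
      rw [hKdef]; ring
    have hMd : M * d ^ 2 = a₁ * d ^ 2 + C * d ^ 2 := by rw [hMdef]; ring
    have s2 : a₁ * d ^ 2 + C * d ^ 2 ≤ d ^ 2 / (4 * lam) := by linarith [e4a, hMd]
    have s3 : Φ r - Φ z ≥ -(2 * C * |r| * |d|) - C * d ^ 2 := by linarith [e1, e2]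
    clear_value d Φ β α lam₀ K M C
    linarith [e3, e4b, e5, hKexp, s2, s3, e6', ha₁r, hβdef]
  -- lift to EReal
  have keyE : ∀ z : ℝ,
      ((-(2 * a₁) * r ^ 2 - α * Real.sqrt lam * r ^ 2 - β - Φ r : ℝ) : EReal) ≤
        Γ z + (((z - r) ^ 2 / (2 * lam) : ℝ) : EReal) := by
    intro z
    by_cases hT : Γ z = ⊤
    · rw [hT]
      rw [EReal.top_add_coe]
      exact le_top
    · have hx : ((Γ z).toReal : EReal) = Γ z := EReal.coe_toReal hT (hbot z)
      have hb := hbound z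
      rw [← hx, ← EReal.coe_add, EReal.coe_le_coe_iff] at hb
      rw [← hx, ← EReal.coe_add, EReal.coe_le_coe_iff]
      have := key z
      simp only [hΦdef] at this hb ⊢
      linarith
  have h1 : ((-(2 * a₁) * r ^ 2 - α * Real.sqrt lam * r ^ 2 - β - Φ r : ℝ) : EReal) ≤
      ⨅ z : ℝ, Γ z + (((z - r) ^ 2 / (2 * lam) : ℝ) : EReal) := le_iInf keyE
  calc ((-(2 * a₁) * r ^ 2 - α * Real.sqrt lam * r ^ 2 - β : ℝ) : EReal)
      = ((-(2 * a₁) * r ^ 2 - α * Real.sqrt lam * r ^ 2 - β - Φ r : ℝ) : EReal)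
        + ((Φ r : ℝ) : EReal) := by
          rw [← EReal.coe_add]; norm_num
    _ ≤ (⨅ z : ℝ, Γ z + (((z - r) ^ 2 / (2 * lam) : ℝ) : EReal)) + ((Φ r : ℝ) : EReal) := by
          exact add_le_add_left h1 _
end

section
/- A proper lower semicontinuous function F : ℝ → (−∞,+∞] is semiconvex (i.e., there exists c ≥ 0 such that r ↦ F(r) + (c/2) r² is convex) if and only if F can be written as F = Γ + Π where: Γ : ℝ → [b,+∞] is proper, convex, lower semicontinuous with Γ(a) = b for some a, b ∈ ℝ (hence 0 ∈ ∂Γ(a)), and Π(r) = ∫_0^r π(z) dz with π : ℝ → ℝ Lipschitz continuous and π(0) = 0. -/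
open MeasureTheory Set Topology

/-- Convexity for extended-real-valued functions on `ℝ`. -/
def ERealConvexOn (f : ℝ → EReal) : Prop :=
  ∀ x y t : ℝ, 0 ≤ t → t ≤ 1 →
    f (t * x + (1 - t) * y) ≤ ((t : ℝ) : EReal) * f x + (((1 - t) : ℝ) : EReal) * f y

namespace SemicvxAux

lemma coe_mul_add (t : ℝ) (ht : 0 ≤ t) (a : EReal) (b : ℝ) :
    (t : EReal) * (a + (b : EReal)) = (t : EReal) * a + ((t * b : ℝ) : EReal) := by
  rcases ht.eq_or_lt with rfl | ht
  · simp
  · induction a using EReal.rec with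
    | bot =>
        rw [EReal.bot_add, EReal.coe_mul_bot_of_pos ht, EReal.bot_add]
    | coe y => norm_cast; ring
    | top =>
        rw [EReal.top_add_coe, EReal.coe_mul_top_of_pos ht, EReal.top_add_coe]

lemma ERealConvexOn.add_coe {f : ℝ → EReal} {g : ℝ → ℝ} (hf : ERealConvexOn f)
    (hg : ConvexOn ℝ univ g) :
    ERealConvexOn (fun r => f r + ((g r : ℝ) : EReal)) := by
  intro x y t ht ht1
  have h1 := hf x y t ht ht1
  have h2 : g (t * x + (1 - t) * y) ≤ t * g x + (1 - t) * g y := by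
    simpa [smul_eq_mul] using hg.2 (mem_univ x) (mem_univ y) ht (by linarith) (by ring)
  calc f (t*x+(1-t)*y) + ((g (t*x+(1-t)*y) : ℝ) : EReal)
      ≤ ((t:ℝ):EReal) * f x + (((1-t):ℝ):EReal) * f y + ((t * g x + (1-t) * g y : ℝ) : EReal) :=
        add_le_add h1 (EReal.coe_le_coe_iff.2 h2)
    _ = (((t:ℝ):EReal) * f x + ((t * g x : ℝ):EReal))
        + ((((1-t):ℝ):EReal) * f y + (((1-t) * g y : ℝ):EReal)) := by
        rw [EReal.coe_add]; exact add_add_add_comm _ _ _ _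
    _ = ((t:ℝ):EReal) * (f x + ((g x:ℝ):EReal)) + (((1-t):ℝ):EReal) * (f y + ((g y:ℝ):EReal)) := by
        rw [coe_mul_add t ht, coe_mul_add (1-t) (by linarith)]

lemma quad_convex (β γ : ℝ) : ConvexOn ℝ univ (fun r : ℝ => r^2/2 + β*r + γ) := by
  refine ⟨convex_univ, fun x _ y _ a b ha hb hab => ?_⟩
  simp only [smul_eq_mul]
  have hb' : b = 1 - a := by linarith
  subst hb'
  nlinarith [mul_nonneg (mul_nonneg ha hb) (sq_nonneg (x - y))]

lemma ERealConvexOn.reflect {G : ℝ → EReal} (hG : ERealConvexOn G) (a₀ : ℝ) :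
    ERealConvexOn (fun r => G (2*a₀ - r)) := by
  intro x y t ht ht1
  have harg : 2*a₀ - (t*x + (1-t)*y) = t*(2*a₀-x) + (1-t)*(2*a₀-y) := by ring
  simpa [harg] using hG (2*a₀-x) (2*a₀-y) t ht ht1

lemma sublevel_right {Γ : ℝ → EReal} (hΓ : ERealConvexOn Γ) {a₀ u r : ℝ}
    (hau : a₀ < u) (hur : u ≤ r) (hgt : Γ a₀ < Γ u) : Γ a₀ < Γ r := by
  rcases eq_or_lt_of_le hur with rfl | hur
  · exact hgt
  by_contra hcon
  push_neg at hcon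
  set t := (u - a₀)/(r - a₀) with hts
  have ht0 : 0 < t := div_pos (by linarith) (by linarith)
  have ht1 : t ≤ 1 := by
    rw [hts, div_le_one (by linarith)]; linarith
  have hne : r - a₀ ≠ 0 := sub_ne_zero.2 (ne_of_gt (by linarith))
  have hu : u = t * r + (1 - t) * a₀ := by
    rw [hts]; field_simp; ring
  have h := hΓ r a₀ t ht0.le ht1
  rw [← hu] at h
  have h2 : Γ u ≤ ((t:ℝ):EReal) * Γ a₀ + (((1-t):ℝ):EReal) * Γ a₀ :=
    le_trans h (add_le_add_left (mul_le_mul_of_nonneg_left hcon (by exact_mod_cast ht0.le : (0:EReal) ≤ ((t:ℝ):EReal))) _)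
  have h3 : ((t:ℝ):EReal) * Γ a₀ + (((1-t):ℝ):EReal) * Γ a₀ = Γ a₀ := by
    rw [← EReal.right_distrib_of_nonneg (by exact_mod_cast ht0.le)
      (by exact_mod_cast (by linarith : (0:ℝ) ≤ 1 - t)), ← EReal.coe_add]
    norm_num
  rw [h3] at h2
  exact absurd (lt_of_lt_of_le hgt h2) (lt_irrefl _)

lemma exists_right {G : ℝ → EReal} (hG : ERealConvexOn G) (hbot : ∀ r, G r ≠ ⊥)
    {a₀ v₀ : ℝ} (hG0 : G a₀ = ((v₀:ℝ) : EReal)) (β γ : ℝ) :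
    ∃ u, a₀ < u ∧
      G a₀ + ((a₀^2/2 + β*a₀ + γ : ℝ):EReal) < G u + ((u^2/2 + β*u + γ : ℝ):EReal) := by
  by_cases h1 : G a₀ + ((a₀^2/2 + β*a₀ + γ : ℝ):EReal)
      < G (a₀+1) + (((a₀+1)^2/2 + β*(a₀+1) + γ : ℝ):EReal)
  · exact ⟨a₀+1, by linarith, h1⟩
  push_neg at h1
  rw [hG0, ← EReal.coe_add] at h1
  set w := v₀ + (a₀^2/2 + β*a₀ + γ) with hws
  have hfin : G (a₀+1) ≠ ⊤ := by
    intro h; rw [h, EReal.top_add_coe] at h1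
    exact EReal.coe_ne_top w (top_le_iff.1 h1)
  set v₁ := (G (a₀+1)).toReal with hv₁s
  have hv₁ : G (a₀+1) = ((v₁:ℝ):EReal) := (EReal.coe_toReal hfin (hbot _)).symm
  set s := max 1 (2*(v₀ - a₀ - β - v₁) + 2) with hss
  have hs1 : (1:ℝ) ≤ s := le_max_left _ _
  have hs2 : 2*(v₀ - a₀ - β - v₁) + 2 ≤ s := le_max_right _ _
  have hs0 : (0:ℝ) < s := lt_of_lt_of_le one_pos hs1
  refine ⟨a₀ + s, by linarith, ?_⟩
  by_contra hcon
  push_neg at hcon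
  rw [hG0, ← EReal.coe_add, ← hws] at hcon
  have hfinu : G (a₀+s) ≠ ⊤ := by
    intro h; rw [h, EReal.top_add_coe] at hcon
    exact EReal.coe_ne_top w (top_le_iff.1 hcon)
  set g := (G (a₀+s)).toReal with hgs
  have hgu : G (a₀+s) = ((g:ℝ):EReal) := (EReal.coe_toReal hfinu (hbot _)).symm
  rw [hgu, ← EReal.coe_add, EReal.coe_le_coe_iff] at hcon
  have ht0 : (0:ℝ) ≤ 1/s := by positivity
  have ht1 : 1/s ≤ 1 := by rw [div_le_one hs0]; linarith
  have hpt : (1/s) * (a₀ + s) + (1 - 1/s) * a₀ = a₀ + 1 := by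
    field_simp; ring
  have hcvx := hG (a₀+s) a₀ (1/s) ht0 ht1
  rw [hpt, hv₁, hgu, hG0, ← EReal.coe_mul, ← EReal.coe_mul, ← EReal.coe_add,
    EReal.coe_le_coe_iff] at hcvx
  have hgb : g ≤ v₀ - s^2/2 - a₀*s - β*s := by nlinarith [hcon]
  have h5 : (1/s)*g ≤ (1/s)*(v₀ - s^2/2 - a₀*s - β*s) :=
    mul_le_mul_of_nonneg_left hgb (by positivity)
  have h6 : (1/s)*(v₀ - s^2/2 - a₀*s - β*s) + (1-1/s)*v₀ = v₀ - s/2 - a₀ - β := by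
    field_simp; ring
  linarith [hcvx, h5, h6]

lemma lsc_attains {f : ℝ → EReal} (hf : LowerSemicontinuous f) {l u a₀ : ℝ}
    (ha₀ : a₀ ∈ Icc l u) (hout : ∀ r, r ∉ Icc l u → f a₀ < f r) :
    ∃ a, ∀ r, f a ≤ f r := by
  set T : Set ℝ := Icc l u ∩ f ⁻¹' Iic (f a₀) with hTs
  have hTa₀ : a₀ ∈ T := ⟨ha₀, mem_preimage.2 (mem_Iic.2 le_rfl)⟩
  have hTcl : IsClosed T :=
    isClosed_Icc.inter (lowerSemicontinuous_iff_isClosed_preimage.1 hf (f a₀))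
  have hTcpt : IsCompact T :=
    IsCompact.of_isClosed_subset isCompact_Icc hTcl inter_subset_left
  haveI : Nonempty T := ⟨⟨a₀, hTa₀⟩⟩
  set A : T → Set ℝ := fun y => T ∩ f ⁻¹' Iic (f y.1) with hAs
  have hAne : ∀ y, (A y).Nonempty := fun y => ⟨y.1, y.2, mem_preimage.2 (mem_Iic.2 le_rfl)⟩
  have hAcl : ∀ y, IsClosed (A y) :=
    fun y => hTcl.inter (lowerSemicontinuous_iff_isClosed_preimage.1 hf (f y.1))
  have hAcpt : ∀ y, IsCompact (A y) :=
    fun y => IsCompact.of_isClosed_subset hTcpt (hAcl y) inter_subset_left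
  have hdir : Directed (· ⊇ ·) A := by
    intro y z
    rcases le_total (f y.1) (f z.1) with h | h
    · exact ⟨y, subset_refl _, fun x hx => ⟨hx.1, le_trans hx.2 h⟩⟩
    · exact ⟨z, fun x hx => ⟨hx.1, le_trans hx.2 h⟩, subset_refl _⟩
  obtain ⟨a, ha⟩ := IsCompact.nonempty_iInter_of_directed_nonempty_isCompact_isClosed
    A hdir hAne hAcpt hAcl
  simp only [mem_iInter] at ha
  have haT : a ∈ T := (ha ⟨a₀, hTa₀⟩).1
  refine ⟨a, fun r => ?_⟩
  by_cases hr : r ∈ T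
  · exact (ha ⟨r, hr⟩).2
  · have : f a₀ < f r := by
      by_cases hr2 : r ∈ Icc l u
      · exact lt_of_not_ge fun hle => hr ⟨hr2, hle⟩
      · exact hout r hr2
    exact le_trans haT.2 this.le

lemma primitive_convex {π : ℝ → ℝ} {Cπ : ℝ} (hπ : LipschitzWith (Real.toNNReal Cπ) π) :
    ConvexOn ℝ univ (fun r => (∫ z in (0:ℝ)..r, π z) + (max Cπ 0)/2 * r^2) := by
  set c := max Cπ 0 with hcs
  have hπc : Continuous π := hπ.continuous
  have hD : ∀ b : ℝ, HasDerivAt (fun r => (∫ z in (0:ℝ)..r, π z) + c/2 * r^2) (π b + c*b) b := by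
    intro b
    have h1 : HasDerivAt (fun u => ∫ z in (0:ℝ)..u, π z) (π b) b :=
      (hπc.integral_hasStrictDerivAt 0 b).hasDerivAt
    have h2 := (hasDerivAt_pow 2 b).const_mul (c/2)
    have h3 := h1.add h2
    refine HasDerivAt.congr_deriv h3 ?_
    simp; ring
  have hdiff : Differentiable ℝ (fun r => (∫ z in (0:ℝ)..r, π z) + c/2 * r^2) :=
    fun b => (hD b).differentiableAt
  have hderiv : deriv (fun r => (∫ z in (0:ℝ)..r, π z) + c/2 * r^2) = fun b => π b + c * b :=
    funext fun b => (hD b).deriv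
  refine Monotone.convexOn_univ_of_deriv hdiff ?_
  rw [hderiv]
  intro x y hxy
  have hd := hπ.dist_le_mul x y
  rw [Real.dist_eq, Real.dist_eq, Real.coe_toNNReal'] at hd
  have h1 : π x - π y ≤ |π x - π y| := le_abs_self _
  have h2 : |x - y| = y - x := by rw [abs_of_nonpos (by linarith)]; ring
  rw [h2] at hd
  have : π x - π y ≤ c * (y - x) := le_trans h1 hd
  simp only []
  nlinarith [le_max_right Cπ 0, this]

lemma add_coe3 (e : EReal) (x y z : ℝ) (h : x + (y + z) = 0) :
    e + (x : EReal) + (y : EReal) + (z : EReal) = e := by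
  rw [add_assoc, add_assoc, ← EReal.coe_add, ← EReal.coe_add, h, EReal.coe_zero, add_zero]

end SemicvxAux

open SemicvxAux in
/-- A proper lower semicontinuous `F : ℝ → (-∞,+∞]` is semiconvex (i.e.
`F + (c/2)|·|²` is convex for some `c ≥ 0`) iff it splits as `F = Γ + Π`, with
`Γ` proper convex lsc attaining its minimum value `b = Γ(a)`, and
`Π(r) = ∫₀ʳ π` the primitive of a Lipschitz function `π` with `π(0) = 0`. -/
theorem semiconvex_iff_decomposition
    (F : ℝ → EReal) (hbot : ∀ r, F r ≠ ⊥) (hproper : ∃ r, F r ≠ ⊤)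
    (hlsc : LowerSemicontinuous F) :
    (∃ c : ℝ, 0 ≤ c ∧
      ERealConvexOn (fun r => F r + ((c / 2 * r ^ 2 : ℝ) : EReal))) ↔
    (∃ (Γ : ℝ → EReal) (π : ℝ → ℝ) (a b Cπ : ℝ),
      (∀ r, ((b : ℝ) : EReal) ≤ Γ r) ∧ (∃ r, Γ r ≠ ⊤) ∧
      ERealConvexOn Γ ∧ LowerSemicontinuous Γ ∧ Γ a = ((b : ℝ) : EReal) ∧
      LipschitzWith (Real.toNNReal Cπ) π ∧ π 0 = 0 ∧
      ∀ r : ℝ, F r = Γ r + ((∫ z in (0:ℝ)..r, π z : ℝ) : EReal)) := by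
  constructor
  · rintro ⟨c, hc, hconv⟩
    obtain ⟨a₀, ha₀⟩ := hproper
    set G : ℝ → EReal := fun r => F r + ((c / 2 * r ^ 2 : ℝ) : EReal) with hGs
    have hGbot : ∀ r, G r ≠ ⊥ := by
      intro r h
      rcases EReal.add_eq_bot_iff.1 h with h | h
      exacts [hbot r h, EReal.coe_ne_bot _ h]
    have hFa₀ : F a₀ = (((F a₀).toReal : ℝ) : EReal) := (EReal.coe_toReal ha₀ (hbot a₀)).symm
    set v₀ : ℝ := (F a₀).toReal + c / 2 * a₀ ^ 2 with hv₀s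
    have hG0 : G a₀ = ((v₀ : ℝ) : EReal) := by
      show F a₀ + _ = _
      rw [hFa₀, ← EReal.coe_add]
    set Γ : ℝ → EReal := fun r => G r + ((r^2/2 + 0*r + 0 : ℝ) : EReal) with hΓs
    have hΓconv : ERealConvexOn Γ := ERealConvexOn.add_coe hconv (quad_convex 0 0)
    -- a point to the right with larger value
    obtain ⟨u, hu, hΓu⟩ := exists_right hconv hGbot hG0 0 0
    -- a point to the left with larger value, via reflection
    have hGrefl : ERealConvexOn (fun r => G (2*a₀ - r)) := ERealConvexOn.reflect hconv a₀
    have hG0' : G (2*a₀ - a₀) = ((v₀ : ℝ) : EReal) := by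
      rw [show 2*a₀ - a₀ = a₀ by ring]; exact hG0
    obtain ⟨u', hu', hGu'⟩ := exists_right hGrefl (fun r => hGbot _) hG0' (-(2*a₀)) (2*a₀^2)
    have hΓl : Γ a₀ < Γ (2*a₀ - u') := by
      have e1 : 2*a₀ - a₀ = a₀ := by ring
      have e2 : (a₀^2/2 + (-(2*a₀))*a₀ + 2*a₀^2 : ℝ) = a₀^2/2 + 0*a₀ + 0 := by ring
      have e3 : (u'^2/2 + (-(2*a₀))*u' + 2*a₀^2 : ℝ)
          = (2*a₀-u')^2/2 + 0*(2*a₀-u') + 0 := by ring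
      rw [e1, e2, e3] at hGu'
      exact hGu'
    set l : ℝ := 2*a₀ - u' with hls
    have hl : l < a₀ := by rw [hls]; linarith
    have hout : ∀ r, r ∉ Icc l u → Γ a₀ < Γ r := by
      intro r hr
      rw [mem_Icc, not_and_or, not_le, not_le] at hr
      rcases hr with hr | hr
      · have h1 : Γ (2*a₀ - a₀) < Γ (2*a₀ - u') := by
          rw [show 2*a₀ - a₀ = a₀ by ring]; exact hΓl
        have h2 := sublevel_right (ERealConvexOn.reflect hΓconv a₀) hu'
          (show u' ≤ 2*a₀ - r by rw [hls] at hr; linarith) h1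
        rw [show 2*a₀ - (2*a₀ - r) = r by ring, show 2*a₀ - a₀ = a₀ by ring] at h2
        exact h2
      · exact sublevel_right hΓconv hu hr.le hΓu
    -- lower semicontinuity of Γ
    have hGlsc : LowerSemicontinuous G := by
      apply LowerSemicontinuous.add' hlsc
        ((continuous_coe_real_ereal.comp (by fun_prop)).lowerSemicontinuous)
      intro x
      exact EReal.continuousAt_add (Or.inr (EReal.coe_ne_bot _)) (Or.inr (EReal.coe_ne_top _))
    have hΓlsc : LowerSemicontinuous Γ := by
      apply LowerSemicontinuous.add' hGlsc
        ((continuous_coe_real_ereal.comp (by fun_prop)).lowerSemicontinuous)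
      intro x
      exact EReal.continuousAt_add (Or.inr (EReal.coe_ne_bot _)) (Or.inr (EReal.coe_ne_top _))
    -- attain the minimum
    obtain ⟨a, hmin⟩ := lsc_attains hΓlsc (⟨hl.le, hu.le⟩ : a₀ ∈ Icc l u) hout
    have hΓa₀fin : Γ a₀ ≠ ⊤ := by
      show G a₀ + _ ≠ _
      rw [hG0, ← EReal.coe_add]
      exact EReal.coe_ne_top _
    have hΓane_top : Γ a ≠ ⊤ := ne_top_of_le_ne_top hΓa₀fin (hmin a₀)
    have hΓabot : Γ a ≠ ⊥ := by
      intro h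
      rcases EReal.add_eq_bot_iff.1 h with h | h
      exacts [hGbot a h, EReal.coe_ne_bot _ h]
    have hb : Γ a = (((Γ a).toReal : ℝ) : EReal) := (EReal.coe_toReal hΓane_top hΓabot).symm
    refine ⟨Γ, fun z => -(c+1)*z, a, (Γ a).toReal, c+1, ?_, ⟨a, by rw [hb]; exact EReal.coe_ne_top _⟩,
      hΓconv, hΓlsc, hb.symm.symm, ?_, by ring, ?_⟩
    · intro r
      rw [← hb]
      exact hmin r
    · apply LipschitzWith.of_dist_le_mul
      intro x y
      rw [Real.dist_eq, Real.dist_eq, Real.coe_toNNReal _ (by linarith : (0:ℝ) ≤ c+1)]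
      rw [show -(c+1)*x - -(c+1)*y = (c+1)*(y-x) by ring, abs_mul,
        abs_of_nonneg (by linarith : (0:ℝ) ≤ c+1), abs_sub_comm]
    · intro r
      have hI : (∫ z in (0:ℝ)..r, -(c+1)*z) = -(c+1)*(r^2/2) := by
        rw [intervalIntegral.integral_const_mul, integral_id]
        ring
      show F r = (F r + _ + _) + _
      rw [hI]
      exact (add_coe3 (F r) _ _ _ (by ring)).symm
  · rintro ⟨Γ, π, a, b, Cπ, hΓb, _, hΓconv, _, _, hπlip, _, hdecomp⟩
    refine ⟨max Cπ 0, le_max_right _ _, ?_⟩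
    have heq : (fun r => F r + ((max Cπ 0 / 2 * r ^ 2 : ℝ) : EReal))
        = fun r => Γ r + (((∫ z in (0:ℝ)..r, π z) + (max Cπ 0)/2 * r^2 : ℝ) : EReal) := by
      funext r
      rw [hdecomp r, add_assoc, ← EReal.coe_add]
    rw [heq]
    exact ERealConvexOn.add_coe hΓconv (primitive_convex hπlip)
end

section
/- Let Ω = (0,1)^d, s ∈ (0,1), q ≥ 1, and K_Ω(x,y) := Σ_{ν∈ℤ^d} |x−y−ν|^{−d−sq}. If u : ℝ^d → ℝ is ℤ^d-periodic and belongs to W^{s,q}_loc(ℝ^d), then ∬_{Ω×Ω} |u(x)−u(y)|^q K_Ω(x,y) dx dy < +∞. Conversely, if u : Ω → ℝ satisfies ∬_{Ω×Ω} |u(x)−u(y)|^q K_Ω(x,y) dx dy < +∞ and u ∈ L^q(Ω), then its ℤ^d-periodic extension belongs to W^{s,q}_loc(ℝ^d). -/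
open MeasureTheory ENNReal Set Metric

/-- The point of `ℝ^d` with integer coordinates `ν`. -/
noncomputable def intVec (d : ℕ) (ν : Fin d → ℤ) : EuclideanSpace ℝ (Fin d) :=
  (WithLp.equiv 2 (Fin d → ℝ)).symm fun i => (ν i : ℝ)

/-- The kernel of the periodic fractional `q`-Laplacian on the unit cube. -/
noncomputable def perKernel (d : ℕ) (s q : ℝ)
    (x y : EuclideanSpace ℝ (Fin d)) : ENNReal :=
  ∑' ν : Fin d → ℤ, ENNReal.ofReal (‖x - y - intVec d ν‖ ^ (-((d:ℝ) + s * q)))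

/-- The open unit cube `(0,1)^d`. -/
def unitCube (d : ℕ) : Set (EuclideanSpace ℝ (Fin d)) :=
  {x | ∀ i, x i ∈ Set.Ioo (0:ℝ) 1}

/-- `ℤ^d`-periodicity. -/
def IsZdPeriodic (d : ℕ) (u : EuclideanSpace ℝ (Fin d) → ℝ) : Prop :=
  ∀ (x : EuclideanSpace ℝ (Fin d)) (ν : Fin d → ℤ), u (x + intVec d ν) = u x

/-- Membership in `W^{s,q}_loc(ℝ^d)`: finite local `L^q` norm and finite
Gagliardo seminorm on every bounded set. -/
def MemWsqLoc (d : ℕ) (s q : ℝ) (u : EuclideanSpace ℝ (Fin d) → ℝ) : Prop :=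
  ∀ B : Set (EuclideanSpace ℝ (Fin d)), Bornology.IsBounded B →
    (∫⁻ x in B, ENNReal.ofReal (|u x| ^ q) ≠ ⊤) ∧
    ∫⁻ x in B, ∫⁻ y in B,
      ENNReal.ofReal (|u x - u y| ^ q / dist x y ^ ((d:ℝ) + s * q)) ≠ ⊤

/-- The `ℤ^d`-periodic extension of a function on the unit cube. -/
noncomputable def perExt (d : ℕ) (u : EuclideanSpace ℝ (Fin d) → ℝ)
    (x : EuclideanSpace ℝ (Fin d)) : ℝ :=
  u ((WithLp.equiv 2 (Fin d → ℝ)).symm fun i => Int.fract (x i))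

section aux
variable {d : ℕ}

lemma intVec_apply (ν : Fin d → ℤ) (i : Fin d) : intVec d ν i = (ν i : ℝ) := rfl

lemma measurable_coord (i : Fin d) : Measurable fun x : EuclideanSpace ℝ (Fin d) => x i :=
  (EuclideanSpace.proj (𝕜 := ℝ) i).continuous.measurable

lemma coord_le_norm (x : EuclideanSpace ℝ (Fin d)) (i : Fin d) : |x i| ≤ ‖x‖ := by
  rw [EuclideanSpace.norm_eq, ← Real.sqrt_sq_eq_abs]
  apply Real.sqrt_le_sqrt
  calc x i ^ 2 = ‖x i‖ ^ 2 := by rw [Real.norm_eq_abs, sq_abs]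
    _ ≤ ∑ j, ‖x j‖ ^ 2 :=
      Finset.single_le_sum (f := fun j => ‖x j‖ ^ 2) (fun j _ => sq_nonneg _)
        (Finset.mem_univ i)

lemma unitCube_bounded : Bornology.IsBounded (unitCube d) := by
  rw [Metric.isBounded_iff_subset_closedBall 0]
  refine ⟨(d:ℝ)+1, fun x hx => ?_⟩
  rw [mem_closedBall, dist_zero_right, EuclideanSpace.norm_eq]
  have h1 : (∑ i, ‖x i‖ ^ 2) ≤ (d:ℝ) := by
    calc (∑ i, ‖x i‖ ^ 2) ≤ ∑ _i : Fin d, (1:ℝ) := by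
          refine Finset.sum_le_sum fun i _ => ?_
          have h2 := (hx i).1.le
          have h3 := (hx i).2.le
          rw [Real.norm_eq_abs, abs_of_nonneg h2]
          nlinarith
      _ = d := by simp
  calc Real.sqrt (∑ i, ‖x i‖ ^ 2) ≤ Real.sqrt (((d:ℝ)+1)^2) :=
        Real.sqrt_le_sqrt (by nlinarith)
    _ = (d:ℝ)+1 := Real.sqrt_sq (by positivity)

lemma setLIntegral_translate (f : EuclideanSpace ℝ (Fin d) → ℝ≥0∞)
    (A : Set (EuclideanSpace ℝ (Fin d))) (a : EuclideanSpace ℝ (Fin d)) :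
    ∫⁻ y in (· + a) '' A, f y = ∫⁻ y in A, f (y + a) :=
  ((measurePreserving_add_right volume a).setLIntegral_comp_emb
    (measurableEmbedding_addRight a) f A).symm

lemma ofReal_mul_rpow_neg {A r c : ℝ} (hA : 0 ≤ A) (hr : 0 ≤ r) :
    ENNReal.ofReal A * ENNReal.ofReal (r ^ (-c)) = ENNReal.ofReal (A / r ^ c) := by
  rw [Real.rpow_neg hr, ← ENNReal.ofReal_mul hA, div_eq_mul_inv]

lemma summable_max_int (p : ℝ) (hp : 1 < p) :
    Summable fun z : ℤ => (max 1 |(z:ℝ)|) ^ (-p) := by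
  have hg : Summable fun z : ℤ => |(z:ℝ)| ^ (-p) + (if z = 0 then (1:ℝ) else 0) :=
    (Real.summable_abs_int_rpow hp).add (summable_of_ne_finset_zero (s := {0})
      (by intro b hb; simp only [Finset.mem_singleton] at hb; simp [hb]))
  refine Summable.of_nonneg_of_le
    (fun z => Real.rpow_nonneg (le_trans zero_le_one (le_max_left _ _)) _) (fun z => ?_) hg
  by_cases h : z = 0
  · subst h
    have : (-p) ≠ 0 := by intro h0; nlinarith
    simp [Real.zero_rpow this]
  · have h1 : (1:ℝ) ≤ |(z:ℝ)| := by
      rw [← Int.cast_abs]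
      exact_mod_cast Int.one_le_abs (by simpa using h)
    rw [max_eq_right h1]
    simp [h]

lemma single_tsum_ne_top (p : ℝ) (hp : 1 < p) :
    ∑' z : ℤ, ENNReal.ofReal ((max 1 |(z:ℝ)|) ^ (-p)) ≠ ⊤ := by
  rw [← ENNReal.ofReal_tsum_of_nonneg
    (fun z => Real.rpow_nonneg (le_trans zero_le_one (le_max_left _ _)) _)
    (summable_max_int p hp)]
  exact ENNReal.ofReal_ne_top

lemma lattice_tsum (p : ℝ) (hp : 1 < p) (n : ℕ) :
    ∑' ν : Fin n → ℤ, (∏ i, ENNReal.ofReal ((max 1 |(ν i : ℝ)|) ^ (-p))) ≠ ⊤ := by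
  induction n with
  | zero =>
      rw [tsum_eq_single (fun i => i.elim0)
        (by intro b hb; exact absurd (funext fun i => i.elim0) hb)]
      simp
  | succ n ih =>
      rw [← Equiv.tsum_eq (Fin.consEquiv fun _ : Fin (n+1) => ℤ)]
      set g : ℤ → ℝ≥0∞ := fun z => ENNReal.ofReal ((max 1 |(z:ℝ)|) ^ (-p)) with hg
      have hterm : ∀ zw : ℤ × (Fin n → ℤ),
          (∏ i, g (((Fin.consEquiv fun _ : Fin (n+1) => ℤ) zw) i))
          = g zw.1 * ∏ i, g (zw.2 i) := by
        intro zw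
        have h1 : (fun i => g (Fin.cons (α := fun _ => ℤ) zw.1 zw.2 i))
            = Fin.cons (g zw.1) (fun i => g (zw.2 i)) := by
          funext i
          exact congrFun (Fin.comp_cons g zw.1 zw.2) i
        calc ∏ i, g (((Fin.consEquiv fun _ : Fin (n+1) => ℤ) zw) i)
            = ∏ i, Fin.cons (α := fun _ => ℝ≥0∞) (g zw.1) (fun i => g (zw.2 i)) i := by
              refine Finset.prod_congr rfl fun i _ => ?_
              exact congrFun h1 i
          _ = g zw.1 * ∏ i, g (zw.2 i) := Fin.prod_cons _ _
      calc ∑' zw : ℤ × (Fin n → ℤ), _ = _ := tsum_congr hterm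
        _ = (∑' z : ℤ, g z) * ∑' w : Fin n → ℤ, (∏ i, g (w i)) := by
          rw [ENNReal.tsum_prod']
          simp_rw [ENNReal.tsum_mul_left, ENNReal.tsum_mul_right]
        _ ≠ ⊤ := ENNReal.mul_ne_top (single_tsum_ne_top p hp) ih

end aux

lemma forward_dir (d : ℕ) (hd : 0 < d) (s q : ℝ)
    (hs : s ∈ Set.Ioo (0:ℝ) 1) (hq : 1 ≤ q)
    (u : EuclideanSpace ℝ (Fin d) → ℝ) (hu : Measurable u) (hper : IsZdPeriodic d u)
    (hmem : MemWsqLoc d s q u) :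
    ∫⁻ x in unitCube d, ∫⁻ y in unitCube d,
        ENNReal.ofReal (|u x - u y| ^ q) * perKernel d s q x y ≠ ⊤ := by
  have hq0 : 0 < q := lt_of_lt_of_le one_pos hq
  have hsq : 0 < s * q := mul_pos hs.1 hq0
  have hd0 : (0:ℝ) < d := by exact_mod_cast hd
  set c : ℝ := (d:ℝ) + s * q with hc
  have hc0 : 0 < c := by rw [hc]; linarith
  have hdc : (d:ℝ) < c := by rw [hc]; linarith
  have hp1 : 1 < c / d := (one_lt_div hd0).2 hdc
  set Ω := unitCube d with hΩ
  set F : EuclideanSpace ℝ (Fin d) → EuclideanSpace ℝ (Fin d) → ℝ≥0∞ :=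
    fun x y => ENNReal.ofReal (|u x - u y| ^ q) with hF
  set g : (Fin d → ℤ) → EuclideanSpace ℝ (Fin d) → EuclideanSpace ℝ (Fin d) → ℝ≥0∞ :=
    fun ν x y => ENNReal.ofReal (‖x - y - intVec d ν‖ ^ (-c)) with hgdef
  have hFpair : Measurable fun p : EuclideanSpace ℝ (Fin d) × EuclideanSpace ℝ (Fin d) =>
      F p.1 p.2 :=
    (((hu.comp measurable_fst).sub (hu.comp measurable_snd)).abs.pow
      measurable_const).ennreal_ofReal
  have hgpair : ∀ ν, Measurable fun p : EuclideanSpace ℝ (Fin d) × EuclideanSpace ℝ (Fin d) =>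
      g ν p.1 p.2 := fun ν =>
    ((((measurable_fst.sub measurable_snd).sub measurable_const).norm).pow
      measurable_const).ennreal_ofReal
  -- Step 1 : split the kernel sum
  have hsplit : (∫⁻ x in Ω, ∫⁻ y in Ω, F x y * perKernel d s q x y)
      = ∑' ν : Fin d → ℤ, ∫⁻ x in Ω, ∫⁻ y in Ω, F x y * g ν x y := by
    have h1 : ∀ x y, F x y * perKernel d s q x y = ∑' ν : Fin d → ℤ, F x y * g ν x y := by
      intro x y
      rw [perKernel, ENNReal.tsum_mul_left]
    calc (∫⁻ x in Ω, ∫⁻ y in Ω, F x y * perKernel d s q x y)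
        = ∫⁻ x in Ω, ∫⁻ y in Ω, ∑' ν : Fin d → ℤ, F x y * g ν x y := by
          simp_rw [h1]
      _ = ∫⁻ x in Ω, ∑' ν : Fin d → ℤ, ∫⁻ y in Ω, F x y * g ν x y := by
          refine lintegral_congr fun x => ?_
          refine lintegral_tsum fun ν => ?_
          exact (((measurable_const.sub hu).abs.pow measurable_const).ennreal_ofReal.mul
            ((((measurable_const.sub measurable_id).sub measurable_const).norm.pow
              measurable_const).ennreal_ofReal)).aemeasurable
      _ = ∑' ν : Fin d → ℤ, ∫⁻ x in Ω, ∫⁻ y in Ω, F x y * g ν x y := by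
          refine lintegral_tsum fun ν => ?_
          exact ((hFpair.mul (hgpair ν)).lintegral_prod_right').aemeasurable
  rw [hsplit]
  -- the near-diagonal terms
  have hball : ∀ ν : Fin d → ℤ,
      (∫⁻ x in Ω, ∫⁻ y in Ω, F x y * g ν x y) ≠ ⊤ := by
    intro ν
    set a := intVec d ν with ha
    set B := Ω ∪ ((· + a) '' Ω) with hB
    have hBb : Bornology.IsBounded B := by
      refine unitCube_bounded.union ?_
      rw [← Set.add_singleton]
      exact unitCube_bounded.add Bornology.isBounded_singleton
    have step1 : ∀ x, (∫⁻ y in Ω, F x y * g ν x y)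
        = ∫⁻ y in (· + a) '' Ω, ENNReal.ofReal (|u x - u y| ^ q / dist x y ^ c) := by
      intro x
      rw [setLIntegral_translate (fun y => ENNReal.ofReal (|u x - u y| ^ q / dist x y ^ c)) Ω a]
      refine lintegral_congr fun y => ?_
      have h2 : u (y + a) = u y := hper y ν
      have h3 : dist x (y + a) = ‖x - y - a‖ := by rw [dist_eq_norm]; congr 1; abel
      rw [h2, h3, hF, hgdef]
      exact ofReal_mul_rpow_neg (Real.rpow_nonneg (abs_nonneg _) _) (norm_nonneg _)
    have hle : (∫⁻ x in Ω, ∫⁻ y in Ω, F x y * g ν x y)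
        ≤ ∫⁻ x in B, ∫⁻ y in B, ENNReal.ofReal (|u x - u y| ^ q / dist x y ^ c) := by
      calc (∫⁻ x in Ω, ∫⁻ y in Ω, F x y * g ν x y)
          = ∫⁻ x in Ω, ∫⁻ y in (· + a) '' Ω,
              ENNReal.ofReal (|u x - u y| ^ q / dist x y ^ c) :=
            lintegral_congr fun x => step1 x
        _ ≤ ∫⁻ x in Ω, ∫⁻ y in B, ENNReal.ofReal (|u x - u y| ^ q / dist x y ^ c) :=
            lintegral_mono fun x => lintegral_mono_set subset_union_right
        _ ≤ ∫⁻ x in B, ∫⁻ y in B, ENNReal.ofReal (|u x - u y| ^ q / dist x y ^ c) :=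
            lintegral_mono' (Measure.restrict_mono subset_union_left le_rfl) (le_refl _)
    exact ne_top_of_le_ne_top ((hmem B hBb).2) hle
  -- L^q bound for the double integral of F
  have hLq := (hmem Ω unitCube_bounded).1
  have hvol : volume Ω ≠ ⊤ := unitCube_bounded.measure_lt_top.ne
  have hW : (∫⁻ x in Ω, ∫⁻ y in Ω, F x y) ≠ ⊤ := by
    have hFb : ∀ x y : EuclideanSpace ℝ (Fin d), F x y ≤
        ENNReal.ofReal (2 ^ q) *
          (ENNReal.ofReal (|u x| ^ q) + ENNReal.ofReal (|u y| ^ q)) := by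
      intro x y
      rw [← ENNReal.ofReal_add (Real.rpow_nonneg (abs_nonneg _) _)
        (Real.rpow_nonneg (abs_nonneg _) _),
        ← ENNReal.ofReal_mul (Real.rpow_nonneg (by norm_num) _)]
      apply ENNReal.ofReal_le_ofReal
      have h1 : |u x - u y| ≤ 2 * max |u x| |u y| := by
        have := abs_sub (u x) (u y)
        rcases le_total |u x| |u y| with h | h
        · rw [max_eq_right h]
          calc |u x - u y| ≤ |u x| + |u y| := by
                rw [sub_eq_add_neg]; exact (abs_add_le _ _).trans (by rw [abs_neg])
            _ ≤ 2 * |u y| := by linarith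
        · rw [max_eq_left h]
          calc |u x - u y| ≤ |u x| + |u y| := by
                rw [sub_eq_add_neg]; exact (abs_add_le _ _).trans (by rw [abs_neg])
            _ ≤ 2 * |u x| := by linarith
      calc |u x - u y| ^ q ≤ (2 * max |u x| |u y|) ^ q :=
            Real.rpow_le_rpow (abs_nonneg _) h1 hq0.le
        _ = 2 ^ q * max |u x| |u y| ^ q :=
            Real.mul_rpow (by norm_num) (le_max_iff.2 (Or.inl (abs_nonneg _)))
        _ ≤ 2 ^ q * (|u x| ^ q + |u y| ^ q) := by
            gcongr 2 ^ q * ?_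
            rcases le_total |u x| |u y| with h | h
            · rw [max_eq_right h]
              exact le_add_of_nonneg_left (Real.rpow_nonneg (abs_nonneg _) _)
            · rw [max_eq_left h]
              exact le_add_of_nonneg_right (Real.rpow_nonneg (abs_nonneg _) _)
    have hA : Measurable fun x : EuclideanSpace ℝ (Fin d) =>
        ENNReal.ofReal (|u x| ^ q) := (hu.abs.pow measurable_const).ennreal_ofReal
    have hb1 : (∫⁻ x in Ω, ∫⁻ y in Ω, F x y)
        ≤ ∫⁻ x in Ω, ∫⁻ y in Ω, (ENNReal.ofReal (2 ^ q) *
            (ENNReal.ofReal (|u x| ^ q) + ENNReal.ofReal (|u y| ^ q))) :=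
      lintegral_mono fun x => lintegral_mono fun y => hFb x y
    have hb2 : ∀ x, (∫⁻ y in Ω, (ENNReal.ofReal (2 ^ q) *
        (ENNReal.ofReal (|u x| ^ q) + ENNReal.ofReal (|u y| ^ q))))
        = ENNReal.ofReal (2 ^ q) *
          (ENNReal.ofReal (|u x| ^ q) * volume Ω + ∫⁻ y in Ω, ENNReal.ofReal (|u y| ^ q)) := by
      intro x
      rw [lintegral_const_mul' _ _ ENNReal.ofReal_ne_top,
        lintegral_add_left measurable_const, setLIntegral_const]
    have hb3 : (∫⁻ x in Ω, ENNReal.ofReal (2 ^ q) *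
        (ENNReal.ofReal (|u x| ^ q) * volume Ω + ∫⁻ y in Ω, ENNReal.ofReal (|u y| ^ q)))
        = ENNReal.ofReal (2 ^ q) *
          ((∫⁻ x in Ω, ENNReal.ofReal (|u x| ^ q)) * volume Ω +
            (∫⁻ y in Ω, ENNReal.ofReal (|u y| ^ q)) * volume Ω) := by
      rw [lintegral_const_mul' _ _ ENNReal.ofReal_ne_top,
        lintegral_add_right _ measurable_const, setLIntegral_const,
        lintegral_mul_const _ hA]
    refine ne_top_of_le_ne_top ?_ (hb1.trans (le_of_eq (by rw [lintegral_congr hb2, hb3])))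
    exact ENNReal.mul_ne_top ENNReal.ofReal_ne_top
      (ENNReal.add_ne_top.2 ⟨ENNReal.mul_ne_top hLq hvol, ENNReal.mul_ne_top hLq hvol⟩)
  -- tail terms
  set S : Finset (Fin d → ℤ) := Fintype.piFinset fun _ => Finset.Icc (-1 : ℤ) 1 with hS
  set t : (Fin d → ℤ) → ℝ≥0∞ :=
    fun ν => ∏ i, ENNReal.ofReal ((max 1 |(ν i : ℝ)|) ^ (-(c/(d:ℝ)))) with ht
  have httop : ∀ ν, t ν ≠ ⊤ := by
    intro ν
    rw [ht]
    exact (ENNReal.prod_lt_top fun i _ => ENNReal.ofReal_lt_top).ne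
  have hgb : ∀ ν : Fin d → ℤ, ν ∉ S → ∀ x ∈ Ω, ∀ y ∈ Ω,
      g ν x y ≤ ENNReal.ofReal (2 ^ c) * t ν := by
    intro ν hν x hx y hy
    rw [hS, Fintype.mem_piFinset] at hν
    push_neg at hν
    obtain ⟨j, hj⟩ := hν
    have hj2 : 2 ≤ |ν j| := by
      simp only [Finset.mem_Icc, not_and_or, not_le] at hj
      rcases hj with h | h
      · rw [abs_of_neg (by omega)]; omega
      · rw [abs_of_pos (by omega)]; omega
    set w := x - y - intVec d ν with hw
    have hwi : ∀ i, w i = x i - y i - (ν i : ℝ) := by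
      intro i
      rw [hw]
      simp [PiLp.sub_apply, intVec_apply]
    have hxyi : ∀ i, |x i - y i| ≤ 1 := by
      intro i
      have h1 := hx i
      have h2 := hy i
      rw [abs_le]
      exact ⟨by linarith [h1.1, h2.2], by linarith [h1.2, h2.1]⟩
    have hlow : ∀ i, |(ν i : ℝ)| - 1 ≤ |w i| := by
      intro i
      rw [hwi i]
      calc |(ν i:ℝ)| - 1 ≤ |(ν i:ℝ)| - |x i - y i| := by linarith [hxyi i]
        _ ≤ |(ν i:ℝ) - (x i - y i)| := abs_sub_abs_le_abs_sub _ _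
        _ = |x i - y i - (ν i:ℝ)| := by rw [abs_sub_comm]
    have hνj : (2:ℝ) ≤ |(ν j:ℝ)| := by
      rw [← Int.cast_abs]
      exact_mod_cast hj2
    have hwnorm : 1 ≤ ‖w‖ :=
      le_trans (by linarith [hlow j, hνj] : (1:ℝ) ≤ |w j|) (coord_le_norm w j)
    have hfac : ∀ i, max 1 |(ν i:ℝ)| ≤ 2 * ‖w‖ := by
      intro i
      rcases le_or_gt |(ν i:ℝ)| 1 with h | h
      · rw [max_eq_left h]; linarith
      · rw [max_eq_right h.le]
        have h2 : (2:ℝ) ≤ |(ν i:ℝ)| := by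
          have h1' : (1:ℤ) < |ν i| := by
            rw [← Int.cast_abs] at h
            exact_mod_cast h
          have h3 : (2:ℤ) ≤ |ν i| := by omega
          rw [← Int.cast_abs]
          exact_mod_cast h3
        have h4 := coord_le_norm w i
        linarith [hlow i]
    set P := ∏ i, max 1 |(ν i:ℝ)| with hP
    have hP1 : (1:ℝ) ≤ P := by
      rw [hP]
      calc (1:ℝ) = ∏ _i : Fin d, (1:ℝ) := by simp
        _ ≤ ∏ i, max 1 |(ν i:ℝ)| :=
          Finset.prod_le_prod (fun i _ => zero_le_one) (fun i _ => le_max_left _ _)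
    have hProd : P ≤ (2*‖w‖)^(d:ℕ) := by
      rw [hP]
      calc (∏ i, max 1 |(ν i:ℝ)|) ≤ ∏ _i : Fin d, (2*‖w‖) :=
          Finset.prod_le_prod (fun i _ => le_trans zero_le_one (le_max_left _ _))
            (fun i _ => hfac i)
        _ = (2*‖w‖)^(d:ℕ) := by rw [Finset.prod_const, Finset.card_univ, Fintype.card_fin]
    have h2w : (0:ℝ) < 2*‖w‖ := by linarith
    have hPd : P ^ ((1:ℝ)/d) ≤ 2*‖w‖ := by
      have h5 := Real.rpow_le_rpow (by linarith : (0:ℝ) ≤ P) hProd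
        (by positivity : (0:ℝ) ≤ 1/(d:ℝ))
      rwa [← Real.rpow_natCast (2*‖w‖) d, ← Real.rpow_mul h2w.le, mul_one_div,
        div_self (ne_of_gt hd0), Real.rpow_one] at h5
    have hkey : ‖w‖ ^ (-c) ≤ 2^c * P^(-(c/(d:ℝ))) := by
      have h6 : (0:ℝ) < P ^ ((1:ℝ)/d) := Real.rpow_pos_of_pos (by linarith) _
      have h7 : P ^ ((1:ℝ)/d) / 2 ≤ ‖w‖ := by linarith
      calc ‖w‖^(-c) ≤ (P ^ ((1:ℝ)/d) / 2)^(-c) :=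
          Real.rpow_le_rpow_of_nonpos (by linarith) h7 (by linarith)
        _ = 2^c * P^(-(c/(d:ℝ))) := by
            rw [Real.div_rpow (le_of_lt h6) (by norm_num : (0:ℝ) ≤ 2),
              ← Real.rpow_mul (by linarith : (0:ℝ) ≤ P),
              Real.rpow_neg (by norm_num : (0:ℝ) ≤ 2),
              show (1:ℝ)/(d:ℝ) * (-c) = -(c/(d:ℝ)) by ring,
              div_eq_mul_inv, inv_inv]
            ring
    calc g ν x y = ENNReal.ofReal (‖w‖^(-c)) := by rw [hgdef]
      _ ≤ ENNReal.ofReal (2^c * P^(-(c/(d:ℝ)))) := ENNReal.ofReal_le_ofReal hkey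
      _ = ENNReal.ofReal (2^c) * t ν := by
          rw [ENNReal.ofReal_mul (Real.rpow_nonneg (by norm_num) _)]
          congr 1
          rw [ht, hP,
            ← Real.finset_prod_rpow _ _ (fun i _ => le_trans zero_le_one (le_max_left _ _)) _]
          exact ENNReal.ofReal_prod_of_nonneg fun i _ =>
            Real.rpow_nonneg (le_trans zero_le_one (le_max_left _ _)) _
  -- integrate the tail bound
  set W := ∫⁻ x in Ω, ∫⁻ y in Ω, F x y with hWdef
  set Cfull := ENNReal.ofReal (2 ^ c) * W with hCfull
  have hCtop : Cfull ≠ ⊤ := ENNReal.mul_ne_top ENNReal.ofReal_ne_top hW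
  have htail : ∀ ν : Fin d → ℤ, ν ∉ S →
      (∫⁻ x in Ω, ∫⁻ y in Ω, F x y * g ν x y) ≤ Cfull * t ν := by
    intro ν hν
    have hKtop : ENNReal.ofReal (2 ^ c) * t ν ≠ ⊤ :=
      ENNReal.mul_ne_top ENNReal.ofReal_ne_top (httop ν)
    have hstep : (∫⁻ x in Ω, ∫⁻ y in Ω, F x y * g ν x y)
        ≤ ∫⁻ x in Ω, ∫⁻ y in Ω, F x y * (ENNReal.ofReal (2 ^ c) * t ν) := by
      refine setLIntegral_mono ((hFpair.mul measurable_const).lintegral_prod_right')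
        fun x hx => ?_
      refine setLIntegral_mono
        (((measurable_const.sub hu).abs.pow measurable_const).ennreal_ofReal.mul
          measurable_const) fun y hy => ?_
      exact mul_le_mul_right (hgb ν hν x hx y hy) _
    have heq : (∫⁻ x in Ω, ∫⁻ y in Ω, F x y * (ENNReal.ofReal (2 ^ c) * t ν))
        = (ENNReal.ofReal (2 ^ c) * t ν) * W := by
      calc (∫⁻ x in Ω, ∫⁻ y in Ω, F x y * (ENNReal.ofReal (2 ^ c) * t ν))
          = ∫⁻ x in Ω, (ENNReal.ofReal (2 ^ c) * t ν) * ∫⁻ y in Ω, F x y := by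
            refine lintegral_congr fun x => ?_
            rw [← lintegral_const_mul' _ _ hKtop]
            simp_rw [mul_comm]
        _ = (ENNReal.ofReal (2 ^ c) * t ν) * W := by
            rw [lintegral_const_mul' _ _ hKtop, hWdef]
    calc (∫⁻ x in Ω, ∫⁻ y in Ω, F x y * g ν x y)
        ≤ (ENNReal.ofReal (2 ^ c) * t ν) * W := hstep.trans (le_of_eq heq)
      _ = Cfull * t ν := by rw [hCfull]; ring
  -- assemble
  have hbound : ∀ ν : Fin d → ℤ,
      (∫⁻ x in Ω, ∫⁻ y in Ω, F x y * g ν x y)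
        ≤ (if ν ∈ S then (∫⁻ x in Ω, ∫⁻ y in Ω, F x y * g ν x y) else 0)
          + (if ν ∈ S then 0 else Cfull * t ν) := by
    intro ν
    by_cases h : ν ∈ S
    · simp [h]
    · simp only [h, if_false, if_neg h, zero_add]
      exact htail ν h
  refine ne_top_of_le_ne_top ?_ (Summable.tsum_le_tsum hbound ENNReal.summable ENNReal.summable)
  rw [ENNReal.tsum_add]
  refine ENNReal.add_ne_top.2 ⟨?_, ?_⟩
  · rw [tsum_eq_sum (s := S) (fun ν hν => by simp [hν])]
    refine (ENNReal.sum_lt_top.2 fun ν _ => ?_).ne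
    split
    · exact (hball ν).lt_top
    · exact absurd ‹ν ∈ S› ‹ν ∉ S›
  · have h1 : ∀ ν : Fin d → ℤ, (if ν ∈ S then 0 else Cfull * t ν) ≤ Cfull * t ν := by
      intro ν
      split
      · exact zero_le
      · exact le_rfl
    refine ne_top_of_le_ne_top ?_ (Summable.tsum_le_tsum h1 ENNReal.summable ENNReal.summable)
    rw [ENNReal.tsum_mul_left]
    exact ENNReal.mul_ne_top hCtop (by rw [ht]; exact lattice_tsum (c/(d:ℝ)) hp1 d)


section aux2
variable {d : ℕ}

lemma null_hyperplane (i : Fin d) (c : ℝ) :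
    volume {x : EuclideanSpace ℝ (Fin d) | x i = c} = 0 := by
  have h := EuclideanSpace.volume_preserving_symm_measurableEquiv_toLp (Fin d)
  have he : {x : EuclideanSpace ℝ (Fin d) | x i = c}
      = (MeasurableEquiv.toLp 2 (Fin d → ℝ)).symm ⁻¹' {f : Fin d → ℝ | f i = c} := rfl
  rw [he, h.measure_preimage]
  · rw [volume_pi]
    exact MeasureTheory.Measure.pi_hyperplane (fun _ => (volume : Measure ℝ)) i c
  · exact (measurableSet_eq_fun (measurable_pi_apply i) measurable_const).nullMeasurableSet

lemma measurable_fr :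
    Measurable fun x : EuclideanSpace ℝ (Fin d) =>
      ((WithLp.equiv 2 (Fin d → ℝ)).symm fun i => Int.fract (x i) :
        EuclideanSpace ℝ (Fin d)) :=
  (MeasurableEquiv.toLp 2 (Fin d → ℝ)).measurable.comp
    (measurable_pi_lambda _ fun i => measurable_fract.comp (measurable_coord i))

lemma measurable_perExt {u : EuclideanSpace ℝ (Fin d) → ℝ} (hu : Measurable u) :
    Measurable (perExt d u) := hu.comp measurable_fr

lemma perExt_periodic (u : EuclideanSpace ℝ (Fin d) → ℝ) : IsZdPeriodic d (perExt d u) := by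
  intro x ν
  unfold perExt
  congr 1
  ext i
  have h1 : (x + intVec d ν) i = x i + (ν i : ℝ) := rfl
  simp [h1, intVec_apply, Int.fract_add_intCast]

lemma perExt_eq_on_cube (u : EuclideanSpace ℝ (Fin d) → ℝ) {x : EuclideanSpace ℝ (Fin d)}
    (hx : x ∈ unitCube d) : perExt d u x = u x := by
  unfold perExt
  congr 1
  ext i
  exact Int.fract_eq_self.2 ⟨(hx i).1.le, (hx i).2⟩

lemma intVec_sub (ν μ : Fin d → ℤ) : intVec d (ν - μ) = intVec d ν - intVec d μ := by
  ext i
  simp [intVec_apply, PiLp.sub_apply]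

lemma unitCube_measurable : MeasurableSet (unitCube d) := by
  have h : unitCube d = ⋂ i, (fun x : EuclideanSpace ℝ (Fin d) => x i) ⁻¹' (Set.Ioo 0 1) := by
    ext x; simp [unitCube]
  rw [h]
  exact MeasurableSet.iInter fun i => (measurable_coord i) measurableSet_Ioo

end aux2

lemma reverse_dir (d : ℕ) (hd : 0 < d) (s q : ℝ)
    (hs : s ∈ Set.Ioo (0:ℝ) 1) (hq : 1 ≤ q)
    (u : EuclideanSpace ℝ (Fin d) → ℝ) (hu : Measurable u)
    (hLq : ∫⁻ x in unitCube d, ENNReal.ofReal (|u x| ^ q) ≠ ⊤)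
    (hE : ∫⁻ x in unitCube d, ∫⁻ y in unitCube d,
        ENNReal.ofReal (|u x - u y| ^ q) * perKernel d s q x y ≠ ⊤) :
    MemWsqLoc d s q (perExt d u) := by
  set c : ℝ := (d:ℝ) + s * q with hc
  set Ω := unitCube d with hΩ
  set v := perExt d u with hv
  have hvm : Measurable v := measurable_perExt hu
  have hvper : IsZdPeriodic d v := perExt_periodic u
  have hveq : ∀ x ∈ Ω, v x = u x := fun x hx => perExt_eq_on_cube u hx
  intro B hB
  obtain ⟨R, hR⟩ := (Metric.isBounded_iff_subset_closedBall 0).1 hB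
  obtain ⟨N, hN⟩ := exists_nat_ge R
  set box : Finset (Fin d → ℤ) := Fintype.piFinset fun _ => Finset.Icc (-(N:ℤ)-1) (N+1)
    with hbox
  set grid : Set (EuclideanSpace ℝ (Fin d)) :=
    ⋃ (i : Fin d), ⋃ (k : ℤ), {x | x i = (k:ℝ)} with hgrid
  have hgrid0 : volume grid = 0 := by
    rw [hgrid]
    exact measure_iUnion_null fun i => measure_iUnion_null fun k => null_hyperplane i k
  set U : Set (EuclideanSpace ℝ (Fin d)) :=
    ⋃ (ν : ↥box), (· + intVec d ν.1) '' Ω with hU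
  have hcover : B ⊆ U ∪ grid := by
    intro x hxB
    have hxb : ∀ i, |x i| ≤ (N:ℝ) := by
      intro i
      have h1 := hR hxB
      rw [mem_closedBall, dist_zero_right] at h1
      exact (coord_le_norm x i).trans (h1.trans hN)
    by_cases hg : ∃ i, ∃ k : ℤ, x i = (k:ℝ)
    · right
      obtain ⟨i, k, hk⟩ := hg
      exact mem_iUnion.2 ⟨i, mem_iUnion.2 ⟨k, hk⟩⟩
    · left
      push_neg at hg
      set ν : Fin d → ℤ := fun i => ⌊x i⌋ with hν
      have hmem : ν ∈ box := by
        rw [hbox, Fintype.mem_piFinset]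
        intro i
        rw [Finset.mem_Icc]
        have h1 : (ν i : ℝ) ≤ x i := Int.floor_le _
        have h2 : x i < (ν i : ℝ) + 1 := Int.lt_floor_add_one _
        have h3 := abs_le.1 (hxb i)
        constructor
        · have : (-(N:ℤ)-1 : ℝ) < (ν i : ℝ) := by push_cast; linarith
          have h4 : (-(N:ℤ)-1 : ℤ) < ν i := by exact_mod_cast this
          omega
        · have : (ν i : ℝ) ≤ (N:ℝ) := by linarith
          have h4 : (ν i : ℤ) ≤ (N:ℤ) := by exact_mod_cast this
          omega
      refine mem_iUnion.2 ⟨⟨ν, hmem⟩, ⟨x - intVec d ν, ?_, by simp⟩⟩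
      intro i
      have h5 : (x - intVec d ν) i = x i - (⌊x i⌋ : ℝ) := by
        simp [PiLp.sub_apply, intVec_apply, hν]
      rw [h5]
      have h6 : (⌊x i⌋:ℝ) ≤ x i := Int.floor_le _
      have h7 : x i ≠ (⌊x i⌋:ℝ) := hg i ⌊x i⌋
      have h8 : x i < (⌊x i⌋:ℝ) + 1 := Int.lt_floor_add_one _
      exact ⟨by cases lt_or_eq_of_le h6 with
        | inl h => linarith
        | inr h => exact absurd h.symm h7, by linarith⟩
  constructor
  · -- L^q part
    have hlqcube : (∫⁻ x in Ω, ENNReal.ofReal (|v x| ^ q))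
        = ∫⁻ x in Ω, ENNReal.ofReal (|u x| ^ q) := by
      refine setLIntegral_congr_fun unitCube_measurable ?_
      exact fun x hx => by simp only [hveq x hx]
    have htr : ∀ ν : Fin d → ℤ,
        (∫⁻ x in (· + intVec d ν) '' Ω, ENNReal.ofReal (|v x| ^ q))
          = ∫⁻ x in Ω, ENNReal.ofReal (|v x| ^ q) := by
      intro ν
      rw [setLIntegral_translate]
      exact lintegral_congr fun x => by rw [hvper x ν]
    have hle : (∫⁻ x in B, ENNReal.ofReal (|v x| ^ q))
        ≤ (box.card : ℝ≥0∞) * ∫⁻ x in Ω, ENNReal.ofReal (|u x| ^ q) := by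
      calc (∫⁻ x in B, ENNReal.ofReal (|v x| ^ q))
          ≤ ∫⁻ x in U ∪ grid, ENNReal.ofReal (|v x| ^ q) := lintegral_mono_set hcover
        _ ≤ (∫⁻ x in U, ENNReal.ofReal (|v x| ^ q))
            + ∫⁻ x in grid, ENNReal.ofReal (|v x| ^ q) := lintegral_union_le _ _ _
        _ = ∫⁻ x in U, ENNReal.ofReal (|v x| ^ q) := by
            rw [setLIntegral_measure_zero _ _ hgrid0, add_zero]
        _ ≤ ∑' ν : ↥box, ∫⁻ x in (· + intVec d ν.1) '' Ω, ENNReal.ofReal (|v x| ^ q) := by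
            rw [hU]; exact lintegral_iUnion_le _ _
        _ = ∑' _ν : ↥box, ∫⁻ x in Ω, ENNReal.ofReal (|u x| ^ q) :=
            tsum_congr fun ν => by rw [htr, hlqcube]
        _ = (box.card : ℝ≥0∞) * ∫⁻ x in Ω, ENNReal.ofReal (|u x| ^ q) := by
            rw [tsum_fintype]
            simp [Finset.sum_const, Fintype.card_coe, nsmul_eq_mul]
    exact ne_top_of_le_ne_top (ENNReal.mul_ne_top (ENNReal.natCast_ne_top _) hLq) hle
  · -- Gagliardo part
    have hKpair : Measurable fun p : EuclideanSpace ℝ (Fin d) × EuclideanSpace ℝ (Fin d) =>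
        perKernel d s q p.1 p.2 := by
      unfold perKernel
      exact Measurable.ennreal_tsum fun ν =>
        (((measurable_fst.sub measurable_snd).sub measurable_const).norm.pow
          measurable_const).ennreal_ofReal
    have hFKpair : Measurable fun p : EuclideanSpace ℝ (Fin d) × EuclideanSpace ℝ (Fin d) =>
        ENNReal.ofReal (|u p.1 - u p.2| ^ q) * perKernel d s q p.1 p.2 :=
      ((((hu.comp measurable_fst).sub (hu.comp measurable_snd)).abs.pow
        measurable_const).ennreal_ofReal).mul hKpair
    have hGpair : Measurable fun p : EuclideanSpace ℝ (Fin d) × EuclideanSpace ℝ (Fin d) =>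
        ENNReal.ofReal (|v p.1 - v p.2| ^ q / dist p.1 p.2 ^ c) :=
      ((((hvm.comp measurable_fst).sub (hvm.comp measurable_snd)).abs.pow
        measurable_const).div (measurable_dist.pow measurable_const)).ennreal_ofReal
    have hpiece : ∀ ν μ : Fin d → ℤ,
        (∫⁻ x in (· + intVec d ν) '' Ω, ∫⁻ y in (· + intVec d μ) '' Ω,
            ENNReal.ofReal (|v x - v y| ^ q / dist x y ^ c))
          ≤ ∫⁻ x in Ω, ∫⁻ y in Ω,
              ENNReal.ofReal (|u x - u y| ^ q) * perKernel d s q x y := by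
      intro ν μ
      rw [setLIntegral_translate]
      have hinner : ∀ x : EuclideanSpace ℝ (Fin d),
          (∫⁻ y in (· + intVec d μ) '' Ω,
            ENNReal.ofReal (|v (x + intVec d ν) - v y| ^ q / dist (x + intVec d ν) y ^ c))
          = ∫⁻ y in Ω, ENNReal.ofReal (|v (x + intVec d ν) - v (y + intVec d μ)| ^ q /
              dist (x + intVec d ν) (y + intVec d μ) ^ c) := fun x =>
        setLIntegral_translate _ _ _
      calc (∫⁻ x in Ω, ∫⁻ y in (· + intVec d μ) '' Ω,
            ENNReal.ofReal (|v (x + intVec d ν) - v y| ^ q / dist (x + intVec d ν) y ^ c))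
          = ∫⁻ x in Ω, ∫⁻ y in Ω,
              ENNReal.ofReal (|v (x + intVec d ν) - v (y + intVec d μ)| ^ q /
                dist (x + intVec d ν) (y + intVec d μ) ^ c) :=
            lintegral_congr fun x => hinner x
        _ ≤ ∫⁻ x in Ω, ∫⁻ y in Ω,
              ENNReal.ofReal (|u x - u y| ^ q) * perKernel d s q x y := by
            refine setLIntegral_mono (hFKpair.lintegral_prod_right') fun x hx => ?_
            have hKy : Measurable fun y : EuclideanSpace ℝ (Fin d) => perKernel d s q x y := by
              unfold perKernel
              exact Measurable.ennreal_tsum fun η =>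
                (((measurable_const.sub measurable_id).sub measurable_const).norm.pow
                  measurable_const).ennreal_ofReal
            refine setLIntegral_mono
              ((((measurable_const.sub hu).abs.pow measurable_const).ennreal_ofReal).mul hKy)
              fun y hy => ?_
            have h1 : v (x + intVec d ν) = u x := by rw [hvper x ν, hveq x hx]
            have h2 : v (y + intVec d μ) = u y := by rw [hvper y μ, hveq y hy]
            have h3 : dist (x + intVec d ν) (y + intVec d μ)
                = ‖x - y - intVec d (μ - ν)‖ := by
              rw [dist_eq_norm, intVec_sub]
              congr 1
              abel
            rw [h1, h2, h3,
              ← ofReal_mul_rpow_neg (Real.rpow_nonneg (abs_nonneg _) _) (norm_nonneg _)]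
            refine mul_le_mul_right ?_ _
            have hterm := ENNReal.le_tsum (f := fun η : Fin d → ℤ =>
              ENNReal.ofReal (‖x - y - intVec d η‖ ^ (-((d:ℝ) + s * q)))) (μ - ν)
            rw [← hc] at hterm
            exact hterm
    have hle2 : (∫⁻ x in B, ∫⁻ y in B,
          ENNReal.ofReal (|v x - v y| ^ q / dist x y ^ c))
        ≤ ∑' _ν : ↥box, ∑' _μ : ↥box, ∫⁻ x in Ω, ∫⁻ y in Ω,
            ENNReal.ofReal (|u x - u y| ^ q) * perKernel d s q x y := by
      calc (∫⁻ x in B, ∫⁻ y in B, ENNReal.ofReal (|v x - v y| ^ q / dist x y ^ c))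
          ≤ ∫⁻ x in B, ∑' μ : ↥box, ∫⁻ y in (· + intVec d μ.1) '' Ω,
              ENNReal.ofReal (|v x - v y| ^ q / dist x y ^ c) := by
            refine lintegral_mono fun x => ?_
            calc (∫⁻ y in B, ENNReal.ofReal (|v x - v y| ^ q / dist x y ^ c))
                ≤ ∫⁻ y in U ∪ grid, ENNReal.ofReal (|v x - v y| ^ q / dist x y ^ c) :=
                  lintegral_mono_set hcover
              _ ≤ (∫⁻ y in U, ENNReal.ofReal (|v x - v y| ^ q / dist x y ^ c))
                  + ∫⁻ y in grid, ENNReal.ofReal (|v x - v y| ^ q / dist x y ^ c) :=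
                  lintegral_union_le _ _ _
              _ = ∫⁻ y in U, ENNReal.ofReal (|v x - v y| ^ q / dist x y ^ c) := by
                  rw [setLIntegral_measure_zero _ _ hgrid0, add_zero]
              _ ≤ ∑' μ : ↥box, ∫⁻ y in (· + intVec d μ.1) '' Ω,
                  ENNReal.ofReal (|v x - v y| ^ q / dist x y ^ c) := by
                  rw [hU]; exact lintegral_iUnion_le _ _
        _ ≤ ∫⁻ x in U ∪ grid, ∑' μ : ↥box, ∫⁻ y in (· + intVec d μ.1) '' Ω,
              ENNReal.ofReal (|v x - v y| ^ q / dist x y ^ c) :=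
            lintegral_mono_set hcover
        _ ≤ (∫⁻ x in U, ∑' μ : ↥box, ∫⁻ y in (· + intVec d μ.1) '' Ω,
              ENNReal.ofReal (|v x - v y| ^ q / dist x y ^ c))
            + ∫⁻ x in grid, ∑' μ : ↥box, ∫⁻ y in (· + intVec d μ.1) '' Ω,
              ENNReal.ofReal (|v x - v y| ^ q / dist x y ^ c) := lintegral_union_le _ _ _
        _ = ∫⁻ x in U, ∑' μ : ↥box, ∫⁻ y in (· + intVec d μ.1) '' Ω,
              ENNReal.ofReal (|v x - v y| ^ q / dist x y ^ c) := by
            rw [setLIntegral_measure_zero _ _ hgrid0, add_zero]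
        _ ≤ ∑' ν : ↥box, ∫⁻ x in (· + intVec d ν.1) '' Ω, ∑' μ : ↥box,
              ∫⁻ y in (· + intVec d μ.1) '' Ω,
              ENNReal.ofReal (|v x - v y| ^ q / dist x y ^ c) := by
            rw [hU]; exact lintegral_iUnion_le _ _
        _ = ∑' ν : ↥box, ∑' μ : ↥box, ∫⁻ x in (· + intVec d ν.1) '' Ω,
              ∫⁻ y in (· + intVec d μ.1) '' Ω,
              ENNReal.ofReal (|v x - v y| ^ q / dist x y ^ c) :=
            tsum_congr fun ν => lintegral_tsum fun μ =>
              (hGpair.lintegral_prod_right').aemeasurable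
        _ ≤ ∑' _ν : ↥box, ∑' _μ : ↥box, ∫⁻ x in Ω, ∫⁻ y in Ω,
              ENNReal.ofReal (|u x - u y| ^ q) * perKernel d s q x y :=
            ENNReal.tsum_le_tsum fun ν => ENNReal.tsum_le_tsum fun μ => hpiece ν.1 μ.1
    refine ne_top_of_le_ne_top ?_ hle2
    simp only [tsum_fintype, Finset.sum_const, nsmul_eq_mul]
    exact ENNReal.mul_ne_top (ENNReal.natCast_ne_top _)
      (ENNReal.mul_ne_top (ENNReal.natCast_ne_top _) hE)


/-- A `ℤ^d`-periodic function in `W^{s,q}_loc(ℝ^d)` has finite periodic-kernel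
energy on the unit cube, and conversely a function on the cube with finite
periodic-kernel energy and finite `L^q` norm has periodic extension in
`W^{s,q}_loc(ℝ^d)`. -/
theorem periodic_kernel_energy_iff_WsqLoc
    (d : ℕ) (hd : 0 < d) (s q : ℝ)
    (hs : s ∈ Set.Ioo (0:ℝ) 1) (hq : 1 ≤ q) :
    (∀ u : EuclideanSpace ℝ (Fin d) → ℝ, Measurable u → IsZdPeriodic d u →
      MemWsqLoc d s q u →
      ∫⁻ x in unitCube d, ∫⁻ y in unitCube d,
        ENNReal.ofReal (|u x - u y| ^ q) * perKernel d s q x y ≠ ⊤) ∧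
    (∀ u : EuclideanSpace ℝ (Fin d) → ℝ, Measurable u →
      (∫⁻ x in unitCube d, ENNReal.ofReal (|u x| ^ q) ≠ ⊤) →
      (∫⁻ x in unitCube d, ∫⁻ y in unitCube d,
        ENNReal.ofReal (|u x - u y| ^ q) * perKernel d s q x y ≠ ⊤) →
      MemWsqLoc d s q (perExt d u)) :=
  ⟨fun u hu hper hmem => forward_dir d hd s q hs hq u hu hper hmem,
   fun u hu h1 h2 => reverse_dir d hd s q hs hq u hu h1 h2⟩
end
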